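/- arXiv:2601.11209 — 9 statements merged into one kernel-verified Lean document; each statement's English description precedes it below -/
import Mathlib

section
/- Let c : [0,∞) → ℝ. There exists a probability measure μ on [0,∞) with ∫ x dμ(x) = 1 such that c(K) = ∫ (x − K)⁺ dμ(x) for all K ≥ 0, if and only if: (1) c is nonincreasing; (2) c is convex; (3) c(0) = 1; (4) lim_{K→∞} c(K) = 0; and (5) the right derivative of c at 0 is ≥ −1. Moreover, if the right derivative of c at 0 equals −1, then μ can be chosen with μ({0}) = 0, i.e., the representing random variable is strictly positive almost surely. -/
/-
The call prices `c K = ∫ (x - K)⁺ dμ` of a law `μ` on `[0, ∞)` have right derivative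
`c'(K+) = -μ (K, ∞)` (dominated convergence), so `1 + c'(·+)` is the distribution function of `μ`.
Conversely, the right derivative `r` of a convex `c` is nondecreasing and right-continuous, tends
to `0` when `c` does, and `r 0 ≥ -1`; hence `-r` is the tail of a probability measure on `[0, ∞)`
with an atom of mass `1 + r 0` at `0`. The layer-cake formula
`∫ (x - K)⁺ dμ = ∫_K^∞ μ (s, ∞) ds = -∫_K^∞ r` and the fundamental theorem of calculus for
right derivatives give back `c K`.
-/

open MeasureTheory Filter Set

open scoped Topology

namespace ConvexOn

variable {f f' : ℝ → ℝ} {a : ℝ}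

lemma slope_le_of_hasDerivWithinAt_Ioi (hf : ConvexOn ℝ (Ici a) f) {x y f'y : ℝ} (hx : a ≤ x)
    (hxy : x < y) (hf'y : HasDerivWithinAt f f'y (Ioi y) y) : slope f x y ≤ f'y := by
  refine ge_of_tendsto ((hasDerivWithinAt_iff_tendsto_slope' self_notMem_Ioi).mp hf'y) ?_
  filter_upwards [self_mem_nhdsWithin] with z (hyz : y < z)
  rw [slope_def_field, slope_def_field]
  exact hf.slope_mono_adjacent hx (hx.trans (hxy.trans hyz).le) hxy hyz

variable (hf : ConvexOn ℝ (Ici a) f) (hf' : ∀ t ∈ Ici a, HasDerivWithinAt f (f' t) (Ioi t) t)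
include hf hf'

lemma monotoneOn_of_hasDerivWithinAt_Ioi : MonotoneOn f' (Ici a) := by
  intro s hs t ht hst
  rcases hst.eq_or_lt with rfl | hst
  · rfl
  exact (hf.le_slope_of_hasDerivWithinAt_Ioi hs ht hst (hf' s hs)).trans
    (hf.slope_le_of_hasDerivWithinAt_Ioi hs hst (hf' t ht))

lemma continuousOn_of_hasDerivWithinAt_Ioi : ContinuousOn f (Ici a) :=
  hf.continuousOn_Ici
    (continuousWithinAt_Ioi_iff_Ici.mp (hf' a self_mem_Ici).continuousWithinAt)

lemma continuousWithinAt_Ici_of_hasDerivWithinAt_Ioi {t : ℝ} (ht : t ∈ Ici a) :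
    ContinuousWithinAt f' (Ici t) t := by
  have hmono := hf.monotoneOn_of_hasDerivWithinAt_Ioi hf'
  have hsub : Ioi t ⊆ Ici a := fun u hu => mem_Ici.2 (le_trans ht (le_of_lt hu))
  have hbdd : BddBelow (f' '' Ioi t) :=
    ⟨f' t, forall_mem_image.2 fun u hu => hmono ht (hsub hu) (le_of_lt hu)⟩
  set m := sInf (f' '' Ioi t)
  have hlim : Tendsto f' (𝓝[>] t) (𝓝 m) := (hmono.mono hsub).tendsto_nhdsGT hbdd
  -- `f' u ≤ slope f u s` for `t < u < s`, and `u ↦ slope f u s` is right-continuous at `t`.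
  have hm_slope : ∀ s, t < s → m ≤ slope f t s := by
    intro s hts
    have hcont : Tendsto (fun u => slope f u s) (𝓝[>] t) (𝓝 (slope f t s)) := by
      simp only [slope_def_field]
      exact (tendsto_const_nhds.sub (hf' t ht).continuousWithinAt.tendsto).div
        (tendsto_const_nhds.sub (tendsto_id.mono_left nhdsWithin_le_nhds)) (sub_ne_zero.2 hts.ne')
    refine le_of_tendsto_of_tendsto hlim hcont ?_
    filter_upwards [Ioo_mem_nhdsGT hts] with u hu
    exact hf.le_slope_of_hasDerivWithinAt_Ioi (hsub hu.1) (ht.trans hts.le) hu.2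
      (hf' u (hsub hu.1))
  have hm : m = f' t := by
    refine le_antisymm ?_ (le_csInf (nonempty_Ioi.image f') (forall_mem_image.2 fun u hu =>
      hmono ht (hsub hu) (le_of_lt hu)))
    refine ge_of_tendsto ((hasDerivWithinAt_iff_tendsto_slope' self_notMem_Ioi).mp (hf' t ht)) ?_
    filter_upwards [self_mem_nhdsWithin] with s hs using hm_slope s hs
  rw [← continuousWithinAt_Ioi_iff_Ici, ContinuousWithinAt, ← hm]
  exact hlim

lemma integral_eq_sub_of_hasDerivWithinAt_Ioi {s u : ℝ} (hs : a ≤ s) (hsu : s ≤ u) :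
    ∫ t in s..u, f' t = f u - f s := by
  have hIcc : Icc s u ⊆ Ici a := fun t ht => hs.trans ht.1
  refine intervalIntegral.integral_eq_sub_of_hasDeriv_right_of_le hsu
    ((hf.continuousOn_of_hasDerivWithinAt_Ioi hf').mono hIcc)
    (fun t ht => hf' t (hIcc (Ioo_subset_Icc_self ht))) ?_
  refine MonotoneOn.intervalIntegrable ?_
  rw [uIcc_of_le hsu]
  exact (hf.monotoneOn_of_hasDerivWithinAt_Ioi hf').mono hIcc

lemma tendsto_atTop_of_hasDerivWithinAt_Ioi {l : ℝ} (hlim : Tendsto f atTop (𝓝 l)) :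
    Tendsto f' atTop (𝓝 0) := by
  have hshift (d : ℝ) : Tendsto (fun t => f (t + d)) atTop (𝓝 l) :=
    hlim.comp (tendsto_atTop_add_const_right _ d tendsto_id)
  have hlow : Tendsto (fun t => f t - f (t - 1)) atTop (𝓝 0) := by
    simpa [sub_eq_add_neg] using hlim.sub (hshift (-1))
  have hup : Tendsto (fun t => f (t + 1) - f t) atTop (𝓝 0) := by
    simpa using (hshift 1).sub hlim
  refine tendsto_of_tendsto_of_tendsto_of_le_of_le' hlow hup ?_ ?_
  · filter_upwards [eventually_ge_atTop (a + 1)] with t ht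
    simpa [slope_def_field] using
      hf.slope_le_of_hasDerivWithinAt_Ioi (by linarith) (sub_one_lt t) (hf' t (by simp; linarith))
  · filter_upwards [eventually_ge_atTop a] with t ht
    simpa [slope_def_field] using
      hf.le_slope_of_hasDerivWithinAt_Ioi ht (by simp; linarith) (lt_add_one t) (hf' t ht)

lemma lintegral_Ioi_ofReal_neg_of_hasDerivWithinAt_Ioi (htop : Tendsto f atTop (𝓝 0)) {K : ℝ}
    (hK : a ≤ K) : ∫⁻ t in Ioi K, ENNReal.ofReal (-f' t) = ENNReal.ofReal (f K) := by
  have hmono := hf.monotoneOn_of_hasDerivWithinAt_Ioi hf'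
  have hsub : Ioi K ⊆ Ici a := fun t ht => mem_Ici.2 (hK.trans (le_of_lt ht))
  have hnonpos : ∀ t ∈ Ici a, f' t ≤ 0 := fun t ht =>
    ge_of_tendsto (hf.tendsto_atTop_of_hasDerivWithinAt_Ioi hf' htop)
      (eventually_ge_atTop t |>.mono fun s hs => hmono ht (mem_Ici.2 (le_trans ht hs)) hs)
  have hseg : ∀ b, K ≤ b → ∫⁻ t in Iic b, ENNReal.ofReal (-f' t) ∂volume.restrict (Ioi K) =
      ENNReal.ofReal (f K - f b) := by
    intro b hKb
    have hint : IntegrableOn (fun t => -f' t) (Ioc K b) := by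
      refine (intervalIntegrable_iff_integrableOn_Ioc_of_le hKb).1
        (MonotoneOn.intervalIntegrable ?_).neg
      rw [uIcc_of_le hKb]
      exact hmono.mono fun t ht => mem_Ici.2 (hK.trans ht.1)
    have hnonneg : ∀ᵐ t ∂volume.restrict (Ioc K b), 0 ≤ -f' t :=
      ae_restrict_of_forall_mem measurableSet_Ioc fun t ht =>
        neg_nonneg.2 (hnonpos t (hsub ht.1))
    rw [Measure.restrict_restrict measurableSet_Iic, Iic_inter_Ioi,
      ← ofReal_integral_eq_lintegral_ofReal hint hnonneg, ← intervalIntegral.integral_of_le hKb,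
      intervalIntegral.integral_neg, hf.integral_eq_sub_of_hasDerivWithinAt_Ioi hf' hK hKb,
      neg_sub]
  refine (aecover_Iic tendsto_id).lintegral_eq_of_tendsto _
    (aemeasurable_restrict_of_antitoneOn measurableSet_Ioi (hmono.mono hsub).neg).ennreal_ofReal
    ?_
  have hlim := ENNReal.tendsto_ofReal ((tendsto_const_nhds (x := f K)).sub htop)
  rw [sub_zero] at hlim
  refine hlim.congr' ?_
  filter_upwards [eventually_ge_atTop K] with b hb using (hseg b hb).symm

end ConvexOn

lemma exists_isProbabilityMeasure_measure_Ioi_eq {G : ℝ → ℝ} (hG : AntitoneOn G (Ici 0))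
    (hG_cont : ∀ t ∈ Ici 0, ContinuousWithinAt G (Ici t) t) (hG_zero : G 0 ≤ 1)
    (hG_top : Tendsto G atTop (𝓝 0)) :
    ∃ μ : Measure ℝ, IsProbabilityMeasure μ ∧ μ (Iio 0) = 0 ∧ μ {0} = ENNReal.ofReal (1 - G 0) ∧
      ∀ t ∈ Ici 0, μ (Ioi t) = ENNReal.ofReal (G t) := by
  set F₀ : ℝ → ℝ := (Ici 0).indicator fun t => 1 - G t with hF₀
  have hmono : Monotone F₀ := by
    intro s t hst
    by_cases hs : 0 ≤ s
    · rw [hF₀, indicator_of_mem (mem_Ici.2 hs), indicator_of_mem (mem_Ici.2 (hs.trans hst))]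
      linarith [hG hs (hs.trans hst) hst]
    · rw [hF₀, indicator_of_notMem (mt mem_Ici.1 hs)]
      by_cases ht : 0 ≤ t
      · rw [indicator_of_mem (mem_Ici.2 ht)]
        linarith [hG self_mem_Ici ht ht]
      · rw [indicator_of_notMem (mt mem_Ici.1 ht)]
  have hcont : ∀ t, ContinuousWithinAt F₀ (Ici t) t := by
    intro t
    rcases lt_or_ge t 0 with ht | ht
    · refine (continuousWithinAt_const (b := (0 : ℝ))).congr_of_eventuallyEq ?_ ?_
      · filter_upwards [nhdsWithin_le_nhds (Iio_mem_nhds ht)] with s hs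
        exact indicator_of_notMem (notMem_Ici.2 hs) _
      · exact indicator_of_notMem (notMem_Ici.2 ht) _
    · exact (continuousWithinAt_const.sub (hG_cont t ht)).congr
        (fun s hs => indicator_of_mem (mem_Ici.2 (ht.trans hs)) _) (indicator_of_mem ht _)
  let F : StieltjesFunction ℝ := ⟨F₀, hmono, hcont⟩
  have hneg : ∀ t < 0, F t = 0 := fun t ht =>
    show F₀ t = 0 from indicator_of_notMem (notMem_Ici.2 ht) _
  have hnonneg : ∀ t ∈ Ici 0, F t = 1 - G t := fun t ht =>
    show F₀ t = 1 - G t from indicator_of_mem ht _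
  have hbot : Tendsto F atBot (𝓝 0) :=
    tendsto_const_nhds.congr' (by
      filter_upwards [eventually_lt_atBot 0] with t ht using (hneg t ht).symm)
  have htop : Tendsto F atTop (𝓝 1) := by
    have := (tendsto_const_nhds (x := (1 : ℝ))).sub hG_top
    rw [sub_zero] at this
    refine this.congr' ?_
    filter_upwards [eventually_ge_atTop 0] with t ht using (hnonneg t ht).symm
  have hleft : Function.leftLim F 0 = 0 :=
    leftLim_eq_of_tendsto (tendsto_const_nhds.congr' (by
      filter_upwards [self_mem_nhdsWithin] with t ht using (hneg t ht).symm))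
  refine ⟨F.measure, F.isProbabilityMeasure hbot htop, ?_, ?_, fun t ht => ?_⟩
  · rw [F.measure_Iio hbot, hleft, sub_zero, ENNReal.ofReal_zero]
  · rw [F.measure_singleton, hleft, sub_zero, hnonneg 0 self_mem_Ici]
  · rw [F.measure_Ioi htop, hnonneg t ht, sub_sub_cancel]

lemma lintegral_ofReal_max_sub_zero (μ : Measure ℝ) (K : ℝ) :
    ∫⁻ x, ENNReal.ofReal (max (x - K) 0) ∂μ = ∫⁻ s in Ioi K, μ (Ioi s) := by
  rw [lintegral_eq_lintegral_meas_lt (f := fun x => max (x - K) 0) μ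
    (Eventually.of_forall fun x => le_max_right _ _) (by fun_prop)]
  have hlevel : ∀ t ∈ Ioi (0 : ℝ), μ {x | t < max (x - K) 0} = μ (Ioi (K + t)) := by
    intro t (ht : 0 < t)
    congr 1
    ext x
    simp only [mem_ofPred_eq, mem_Ioi, lt_max_iff, not_lt.2 ht.le, or_false]
    constructor <;> intro h <;> linarith
  rw [setLIntegral_congr_fun measurableSet_Ioi hlevel]
  have hpre : (fun t => K + t) ⁻¹' Ioi K = Ioi 0 := by ext; simp
  rw [← hpre]
  exact (measurePreserving_add_left volume K).setLIntegral_comp_preimage_emb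
    (measurableEmbedding_addLeft K) (fun s => μ (Ioi s)) (Ioi K)

noncomputable def callPrice (μ : Measure ℝ) (K : ℝ) : ℝ := ∫ x, max (x - K) 0 ∂μ

section CallPrice

variable {μ : Measure ℝ}

lemma callPrice_zero_eq_integral (h : μ (Iio 0) = 0) : callPrice μ 0 = ∫ x, x ∂μ := by
  refine integral_congr_ae ?_
  filter_upwards [measure_eq_zero_iff_ae_notMem.1 h] with x hx
  simpa using notMem_Iio.1 hx

variable (hμ : Integrable id μ)
include hμ

lemma tendsto_callPrice_atTop : Tendsto (callPrice μ) atTop (𝓝 0) := by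
  have h := tendsto_integral_filter_of_dominated_convergence (μ := μ) (l := atTop)
    (F := fun K x => max (x - K) 0) (f := fun _ => 0) (fun x => |x|)
    (Eventually.of_forall fun K => (by fun_prop : Continuous fun x : ℝ => max (x - K) 0)
      |>.aestronglyMeasurable)
    (by
      filter_upwards [eventually_ge_atTop 0] with K hK
      refine Eventually.of_forall fun x => ?_
      rw [Real.norm_of_nonneg (le_max_right _ _)]
      exact max_le (by linarith [le_abs_self x]) (abs_nonneg x))
    hμ.abs
    (Eventually.of_forall fun x => tendsto_const_nhds.congr' (by
      filter_upwards [eventually_ge_atTop x] with K hK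
      exact (max_eq_right (by linarith)).symm))
  rwa [integral_zero] at h

variable [IsFiniteMeasure μ]

lemma integrable_max_sub_zero (K : ℝ) : Integrable (fun x => max (x - K) 0) μ :=
  (hμ.sub (integrable_const K)).pos_part

lemma antitone_callPrice : Antitone (callPrice μ) := fun K K' hKK' =>
  integral_mono (integrable_max_sub_zero hμ K') (integrable_max_sub_zero hμ K) fun x =>
    max_le_max (by linarith) le_rfl

lemma convexOn_callPrice : ConvexOn ℝ univ (callPrice μ) := by
  refine ⟨convex_univ, fun p _ q _ a b ha hb hab => ?_⟩
  simp only [callPrice, smul_eq_mul]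
  rw [← integral_const_mul, ← integral_const_mul,
    ← integral_add ((integrable_max_sub_zero hμ p).const_mul a)
      ((integrable_max_sub_zero hμ q).const_mul b)]
  refine integral_mono (integrable_max_sub_zero hμ _)
    (((integrable_max_sub_zero hμ p).const_mul a).add
      ((integrable_max_sub_zero hμ q).const_mul b)) fun x => max_le ?_ (by positivity)
  have hx : x - (a * p + b * q) = a * (x - p) + b * (x - q) := by
    linear_combination (-x) * hab
  rw [hx]
  gcongr <;> exact le_max_left _ _

lemma hasDerivWithinAt_callPrice (K : ℝ) :
    HasDerivWithinAt (callPrice μ) (-μ.real (Ioi K)) (Ioi K) K := by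
  rw [hasDerivWithinAt_iff_tendsto_slope' self_notMem_Ioi,
    ← integral_indicator_one measurableSet_Ioi, ← integral_neg]
  have h := tendsto_integral_filter_of_dominated_convergence (μ := μ) (l := 𝓝[>] K)
    (F := fun y x => (max (x - y) 0 - max (x - K) 0) / (y - K))
    (f := fun x => -(Ioi K).indicator 1 x) (fun _ => 1)
    (Eventually.of_forall fun y =>
      (by fun_prop : Continuous fun x : ℝ => (max (x - y) 0 - max (x - K) 0) / (y - K))
        |>.aestronglyMeasurable)
    (by
      filter_upwards [self_mem_nhdsWithin] with y (hy : K < y)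
      refine Eventually.of_forall fun x => ?_
      rw [Real.norm_eq_abs, abs_div, abs_of_pos (sub_pos.2 hy), div_le_one (sub_pos.2 hy)]
      have := abs_max_sub_max_le_abs (x - y) (x - K) 0
      rwa [show x - y - (x - K) = -(y - K) by ring, abs_neg, abs_of_pos (sub_pos.2 hy)] at this)
    (integrable_const 1)
    (Eventually.of_forall fun x => by
      rcases le_or_gt x K with hx | hx
      · refine tendsto_const_nhds.congr' ?_
        filter_upwards [self_mem_nhdsWithin] with y (hy : K < y)
        simp [indicator_of_notMem (notMem_Ioi.2 hx), max_eq_right (by linarith : x - y ≤ 0),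
          max_eq_right (by linarith : x - K ≤ 0)]
      · refine tendsto_const_nhds.congr' ?_
        filter_upwards [Ioo_mem_nhdsGT hx] with y hy
        rw [indicator_of_mem (mem_Ioi.2 hx), max_eq_left (by linarith [hy.2]),
          max_eq_left (by linarith), Pi.one_apply, show x - y - (x - K) = -(y - K) by ring,
          neg_div, div_self (sub_pos.2 hy.1).ne'])
  refine h.congr' ?_
  filter_upwards [self_mem_nhdsWithin] with y hy
  rw [integral_div, integral_sub (integrable_max_sub_zero hμ y) (integrable_max_sub_zero hμ K),
    slope_def_field]
  rfl

end CallPrice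

lemma exists_measure_callPrice_eq {c : ℝ → ℝ} {L : ℝ} (hA : AntitoneOn c (Ici 0))
    (hC : ConvexOn ℝ (Ici 0) c) (htop : Tendsto c atTop (𝓝 0))
    (hd : HasDerivWithinAt c L (Ioi 0) 0) (hL : -1 ≤ L) :
    ∃ μ : Measure ℝ, IsProbabilityMeasure μ ∧ μ (Iio 0) = 0 ∧ μ {0} = ENNReal.ofReal (1 + L) ∧
      ∀ K ∈ Ici 0, callPrice μ K = c K := by
  set r : ℝ → ℝ := fun t => derivWithin c (Ioi t) t
  have hr : ∀ t ∈ Ici 0, HasDerivWithinAt c (r t) (Ioi t) t := by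
    intro t ht
    rcases (mem_Ici.1 ht).eq_or_lt with rfl | ht
    · exact hd.differentiableWithinAt.hasDerivWithinAt
    · exact hC.hasDerivWithinAt_rightDeriv_of_mem_interior (by rwa [interior_Ici])
  have hr0 : r 0 = L := hd.derivWithin (uniqueDiffWithinAt_Ioi 0)
  obtain ⟨μ, hP, hneg, hzero, htail⟩ :=
    exists_isProbabilityMeasure_measure_Ioi_eq (G := fun t => -r t)
    (hC.monotoneOn_of_hasDerivWithinAt_Ioi hr).neg
    (fun t ht => (hC.continuousWithinAt_Ici_of_hasDerivWithinAt_Ioi hr ht).neg)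
    (by rw [hr0]; linarith)
    (by simpa using (hC.tendsto_atTop_of_hasDerivWithinAt_Ioi hr htop).neg)
  refine ⟨μ, hP, hneg, by rw [hzero, hr0, sub_neg_eq_add], fun K hK => ?_⟩
  have hlint : ∫⁻ x, ENNReal.ofReal (max (x - K) 0) ∂μ = ENNReal.ofReal (c K) := by
    rw [lintegral_ofReal_max_sub_zero, setLIntegral_congr_fun measurableSet_Ioi
      fun s hs => htail s (mem_Ici.2 (le_trans hK (le_of_lt hs))),
      hC.lintegral_Ioi_ofReal_neg_of_hasDerivWithinAt_Ioi hr htop hK]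
  have hcK : 0 ≤ c K :=
    le_of_tendsto htop (eventually_ge_atTop K |>.mono fun t ht => hA hK (le_trans hK ht) ht)
  rw [callPrice, integral_eq_lintegral_of_nonneg_ae (f := fun x => max (x - K) 0)
    (ae_of_all _ fun x => le_max_right _ _)
    (by fun_prop : Continuous fun x : ℝ => max (x - K) 0).aestronglyMeasurable, hlint,
    ENNReal.toReal_ofReal hcK]

/-- A function `c` on `[0,∞)` is representable as
`c(K) = ∫ (x-K)⁺ dμ(x)` for a probability measure `μ` on `[0,∞)` with unit mean
iff it is nonincreasing, convex, `c(0)=1`, tends to `0` at `∞`, and has right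
derivative at `0` at least `-1`. Moreover if the right derivative at `0` equals `-1`,
then `μ` can be chosen with `μ({0}) = 0`. -/
theorem stmt_1 (c : ℝ → ℝ) :
    ((∃ μ : Measure ℝ, IsProbabilityMeasure μ ∧ μ (Iio 0) = 0 ∧ (∫ x, x ∂μ) = 1 ∧
        ∀ K, 0 ≤ K → c K = ∫ x, max (x - K) 0 ∂μ) ↔
      (AntitoneOn c (Ici 0) ∧ ConvexOn ℝ (Ici 0) c ∧ c 0 = 1 ∧
        Tendsto c atTop (nhds 0) ∧
        ∃ L, -1 ≤ L ∧
          Tendsto (fun ε => (c (0 + ε) - c 0) / ε) (nhdsWithin 0 (Ioi 0)) (nhds L))) ∧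
    ((AntitoneOn c (Ici 0) ∧ ConvexOn ℝ (Ici 0) c ∧ c 0 = 1 ∧
        Tendsto c atTop (nhds 0) ∧
        Tendsto (fun ε => (c (0 + ε) - c 0) / ε) (nhdsWithin 0 (Ioi 0)) (nhds (-1))) →
      ∃ μ : Measure ℝ, IsProbabilityMeasure μ ∧ μ (Iio 0) = 0 ∧ μ {0} = 0 ∧
        (∫ x, x ∂μ) = 1 ∧ ∀ K, 0 ≤ K → c K = ∫ x, max (x - K) 0 ∂μ) := by
  have hslope (L : ℝ) : Tendsto (fun ε => (c (0 + ε) - c 0) / ε) (𝓝[>] 0) (𝓝 L) ↔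
      HasDerivWithinAt c L (Ioi 0) 0 := by
    have : slope c 0 = fun ε => (c (0 + ε) - c 0) / ε :=
      funext fun ε => by simp [slope_def_field]
    rw [hasDerivWithinAt_iff_tendsto_slope' self_notMem_Ioi, this]
  refine ⟨⟨fun ⟨μ, hP, hneg, hmean, hrep⟩ => ?_, fun ⟨hA, hC, h0, htop, L, hL, hd⟩ => ?_⟩,
    fun ⟨hA, hC, h0, htop, hd⟩ => ?_⟩
  · have hμ : Integrable id μ := by
      by_contra h
      exact one_ne_zero (hmean.symm.trans (integral_undef h))
    have hc : EqOn (callPrice μ) c (Ici 0) := fun K hK => (hrep K hK).symm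
    refine ⟨((antitone_callPrice hμ).antitoneOn _).congr hc,
      ((convexOn_callPrice hμ).subset (subset_univ _) (convex_Ici 0)).congr hc,
      by rw [← hc self_mem_Ici, callPrice_zero_eq_integral hneg, hmean],
      (tendsto_callPrice_atTop hμ).congr' (eventually_ge_atTop 0 |>.mono fun K hK => hc hK),
      -μ.real (Ioi 0), by linarith [measureReal_le_one (μ := μ) (s := Ioi 0)], (hslope _).2 ?_⟩
    exact (hasDerivWithinAt_callPrice hμ 0).congr
      (fun K hK => (hc (Ioi_subset_Ici_self hK)).symm) (hc self_mem_Ici).symm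
  · obtain ⟨μ, hP, hneg, -, hμ⟩ := exists_measure_callPrice_eq hA hC htop ((hslope L).1 hd) hL
    exact ⟨μ, hP, hneg, by rw [← callPrice_zero_eq_integral hneg, hμ 0 self_mem_Ici, h0],
      fun K hK => (hμ K hK).symm⟩
  · obtain ⟨μ, hP, hneg, hzero, hμ⟩ :=
      exists_measure_callPrice_eq hA hC htop ((hslope _).1 hd) le_rfl
    exact ⟨μ, hP, hneg, by simpa using hzero,
      by rw [← callPrice_zero_eq_integral hneg, hμ 0 self_mem_Ici, h0],
      fun K hK => (hμ K hK).symm⟩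
end

section
/- Let f : [0,∞) → ℝ be convex with finite right derivative f′₊(0) at 0, and let f′₊ denote its right derivative, which is nondecreasing and right-continuous on [0,∞). Let μ be the Lebesgue–Stieltjes measure on (0,∞) induced by f′₊, i.e., μ((a,b]) = f′₊(b) − f′₊(a) for 0 ≤ a < b. Then for every x ≥ 0, f(x) = f(0) + f′₊(0)·x + ∫_{(0,∞)} (x − K)⁺ dμ(K). -/
/-!
Both sides are computed through `∫₀ˣ g`. By the layer-cake formula, `∫_{(0,∞)} (x - K)⁺ dμ(K)`
is `∫₀ˣ μ((0, x - t]) dt = ∫₀ˣ (g s - g 0) ds`. On the other hand `f` is continuous on `[0, x]`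
(convexity inside, right differentiability at `0`), so the fundamental theorem of calculus
for right derivatives gives `∫₀ˣ g = f x - f 0`.
-/

open MeasureTheory Filter Set Topology

theorem hasDerivWithinAt_Ioi_iff_tendsto_slope_zero_right {f : ℝ → ℝ} {f' x : ℝ} :
    HasDerivWithinAt f f' (Ioi x) x ↔
      Tendsto (fun t ↦ (f (x + t) - f x) / t) (𝓝[>] 0) (𝓝 f') := by
  have : 𝓝[>] x = map (x + ·) (𝓝[>] 0) := by simp
  rw [hasDerivWithinAt_iff_tendsto_slope' self_notMem_Ioi, this, tendsto_map'_iff]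
  congr! 1
  ext t
  simp [slope_def_field]

theorem StieltjesFunction.setIntegral_Ioi_max_sub (g : StieltjesFunction ℝ) {a x : ℝ}
    (hax : a ≤ x) :
    ∫ K in Ioi a, max (x - K) 0 ∂g.measure = ∫ t in a..x, (g t - g a) := by
  have hintegrable : IntegrableOn (fun K ↦ max (x - K) 0) (Ioi a) g.measure := by
    rw [← Ioc_union_Ioi_eq_Ioi hax]
    refine IntegrableOn.union ?_ ?_
    · exact (by fun_prop : Continuous fun K : ℝ ↦ max (x - K) 0).integrableOn_Icc.mono_set
        Ioc_subset_Icc_self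
    · exact integrableOn_zero.congr_fun (fun K hK ↦ by simp [le_of_lt (mem_Ioi.mp hK)])
        _root_.measurableSet_Ioi
  have hbdd : ∀ K ∈ Ioi a, max (x - K) 0 ≤ x - a := fun K hK ↦
    max_le (by linarith [mem_Ioi.mp hK]) (sub_nonneg.mpr hax)
  rw [hintegrable.integral_eq_integral_Ioc_meas_le (.of_forall fun _ ↦ le_max_right _ _)
    (ae_restrict_of_forall_mem _root_.measurableSet_Ioi hbdd)]
  have hlevel : ∀ t ∈ Ioc 0 (x - a),
      (g.measure.restrict (Ioi a)).real {K | t ≤ max (x - K) 0} = g (x - t) - g a := by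
    intro t ⟨ht0, htx⟩
    have hset : {K | t ≤ max (x - K) 0} = Iic (x - t) := by
      ext K
      simp only [mem_ofPred_eq, mem_Iic, le_max_iff]
      constructor
      · rintro (h | h) <;> linarith
      · intro h; left; linarith
    rw [hset, measureReal_restrict_apply measurableSet_Iic, inter_comm, Ioi_inter_Iic,
      measureReal_def, g.measure_Ioc, ENNReal.toReal_ofReal (sub_nonneg.mpr (g.mono (by linarith)))]
  calc _ = ∫ t in Ioc 0 (x - a), (g (x - t) - g a) :=
        setIntegral_congr_fun measurableSet_Ioc hlevel
    _ = ∫ t in 0..x - a, (g (x - t) - g a) :=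
        (intervalIntegral.integral_of_le (sub_nonneg.mpr hax)).symm
    _ = ∫ t in a..x, (g t - g a) := by
        rw [intervalIntegral.integral_comp_sub_left (fun s ↦ g s - g a), sub_sub_cancel, sub_zero]

theorem ConvexOn.integral_eq_sub_of_hasDerivWithinAt_Ioi_s2 {f g : ℝ → ℝ} {a b : ℝ}
    (hf : ConvexOn ℝ (Ici a) f) (hderiv : ∀ t, a ≤ t → HasDerivWithinAt f (g t) (Ioi t) t)
    (hg : IntervalIntegrable g volume a b) (hab : a ≤ b) :
    ∫ t in a..b, g t = f b - f a := by
  have hcont : ContinuousOn f (Icc a b) :=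
    (hf.continuousOn_Ici (continuousWithinAt_Ioi_iff_Ici.mp
      (hderiv a le_rfl).continuousWithinAt)).mono Icc_subset_Ici_self
  exact intervalIntegral.integral_eq_sub_of_hasDeriv_right_of_le hab hcont
    (fun t ht ↦ hderiv t ht.1.le) hg

/-- representation of a convex function via its right derivative `g`
(a nondecreasing right-continuous function, encoded as a `StieltjesFunction`) and
the Lebesgue–Stieltjes measure `g.measure` it induces on `(0,∞)`:
`f x = f 0 + g 0 * x + ∫_{(0,∞)} (x - K)⁺ dg.measure(K)` for `x ≥ 0`. -/
theorem stmt_2 (f : ℝ → ℝ) (g : StieltjesFunction ℝ)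
    (hf : ConvexOn ℝ (Ici 0) f)
    (hg : ∀ x, 0 ≤ x →
      Tendsto (fun ε => (f (x + ε) - f x) / ε) (nhdsWithin 0 (Ioi 0)) (nhds (g x))) :
    ∀ x, 0 ≤ x →
      f x = f 0 + g 0 * x + ∫ K in Ioi (0 : ℝ), max (x - K) 0 ∂g.measure := by
  intro x hx
  have hgint : IntervalIntegrable g volume 0 x := g.mono.intervalIntegrable
  have hftc : ∫ t in 0..x, g t = f x - f 0 :=
    hf.integral_eq_sub_of_hasDerivWithinAt_Ioi_s2
      (fun t ht ↦ hasDerivWithinAt_Ioi_iff_tendsto_slope_zero_right.mpr (hg t ht)) hgint hx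
  rw [g.setIntegral_Ioi_max_sub hx, intervalIntegral.integral_sub hgint intervalIntegrable_const,
    hftc, intervalIntegral.integral_const, smul_eq_mul]
  ring
end

section
/- Let 0 = K⁰ < K¹ < ⋯ < Kᴺ be real numbers and let C⁰, C¹, …, Cᴺ be real numbers with Cᴺ = 0. Define dCⁱ := (C^{i+1} − Cⁱ)/(K^{i+1} − Kⁱ) for 0 ≤ i ≤ N−1, dCᴺ := 0, and pⁱ := dCⁱ − dC^{i−1} for 1 ≤ i ≤ N. Define the piecewise linear interpolator C̄(K) := dCⁱ·(K − K^{i+1}) + C^{i+1} for K ∈ [Kⁱ, K^{i+1}), 0 ≤ i ≤ N−1. Then for every K ∈ [0, Kᴺ): C̄(K) = Σ_{i=1}^{N} pⁱ · (Kⁱ − K)⁺. -/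
open Finset

/-!
The line `dCʲ (x - Kʲ) + Cʲ` through the `j`-th node differs from the next one by the kink
`(dC^{j+1} - dCʲ)(K^{j+1} - x)` and vanishes for `j = N`, so summing the kinks to the right of `j`
telescopes to that line. On `[Kⁱ, K^{i+1})` the puts `(Kⁿ - x)⁺` vanish
for `n ≤ i` and are linear for `n > i`, so the put expansion is exactly this telescoping sum.
-/

theorem sum_Ioc_slope_jumps_mul {R : Type*} [CommRing R] {N : ℕ} {K C dC : ℕ → R}
    (hslope : ∀ j < N, dC j * (K (j + 1) - K j) = C (j + 1) - C j)
    (hdCN : dC N = 0) (hCN : C N = 0) (x : R) {j : ℕ} (hj : j ≤ N) :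
    ∑ n ∈ Ioc j N, (dC n - dC (n - 1)) * (K n - x) = dC j * (x - K j) + C j := by
  induction hj using Nat.decreasingInduction with
  | self => simp [hdCN, hCN]
  | of_succ j hj ih =>
    rw [← Icc_add_one_left_eq_Ioc, ← Ioc_insert_left hj, sum_insert (by simp), ih,
      Nat.add_sub_cancel]
    linear_combination -hslope j hj

theorem sum_Icc_mul_max_sub_eq_sum_Ioc {R : Type*} [Ring R] [LinearOrder R] [IsOrderedRing R]
    {N i : ℕ} {K : ℕ → R} (p : ℕ → R) (hK : MonotoneOn K (Set.Iic N)) (hi : i ≤ N) {x : R}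
    (hxi : K i ≤ x) (hxi1 : x < K (i + 1)) :
    ∑ n ∈ Icc 1 N, p n * max (K n - x) 0 = ∑ n ∈ Ioc i N, p n * (K n - x) := by
  rw [show Icc 1 N = Ioc 0 N from Icc_add_one_left_eq_Ioc 0 N, ← sum_Ioc_consecutive _ (Nat.zero_le i) hi]
  have hleft : ∀ n ∈ Ioc 0 i, p n * max (K n - x) 0 = 0 := fun n hn ↦ by
    have hKn : K n ≤ x := (hK (by grind) (by grind) (mem_Ioc.1 hn).2).trans hxi
    rw [max_eq_right (sub_nonpos.2 hKn), mul_zero]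
  have hright : ∀ n ∈ Ioc i N, p n * max (K n - x) 0 = p n * (K n - x) := fun n hn ↦ by
    have hKn : x < K n := hxi1.trans_le (hK (by grind) (by grind) (mem_Ioc.1 hn).1)
    rw [max_eq_left (sub_nonneg.2 hKn.le)]
  rw [sum_eq_zero hleft, zero_add, sum_congr rfl hright]

theorem stmt_4_general {N : ℕ} (K : ℕ → ℝ) (C : ℕ → ℝ)
    (hKmono : ∀ i < N, K i < K (i + 1))
    (hCN : C N = 0)
    (dC : ℕ → ℝ)
    (hdC : ∀ i < N, dC i = (C (i + 1) - C i) / (K (i + 1) - K i))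
    (hdCN : dC N = 0)
    (p : ℕ → ℝ) (hp : ∀ i, 1 ≤ i → i ≤ N → p i = dC i - dC (i - 1)) :
    ∀ i < N, ∀ x : ℝ, K i ≤ x → x < K (i + 1) →
      dC i * (x - K (i + 1)) + C (i + 1) = ∑ n ∈ Finset.Icc 1 N, p n * max (K n - x) 0 := by
  intro i hi x hxi hxi1
  have hK : MonotoneOn K (Set.Iic N) := (strictMonoOn_Iic_of_lt_succ hKmono).monotoneOn
  have hslope : ∀ j < N, dC j * (K (j + 1) - K j) = C (j + 1) - C j := fun j hj ↦ by
    rw [hdC j hj, div_mul_cancel₀ _ (sub_ne_zero.2 (hKmono j hj).ne')]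
  have hp' : ∀ n ∈ Ioc i N, p n * (K n - x) = (dC n - dC (n - 1)) * (K n - x) := fun n hn ↦ by
    rw [hp n (by grind) (mem_Ioc.1 hn).2]
  calc dC i * (x - K (i + 1)) + C (i + 1) = dC i * (x - K i) + C i := by
        linear_combination -hslope i hi
    _ = ∑ n ∈ Ioc i N, (dC n - dC (n - 1)) * (K n - x) :=
        (sum_Ioc_slope_jumps_mul hslope hdCN hCN x hi.le).symm
    _ = ∑ n ∈ Icc 1 N, p n * max (K n - x) 0 := by
        rw [sum_Icc_mul_max_sub_eq_sum_Ioc p hK hi.le hxi hxi1, sum_congr rfl hp']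

/-- the piecewise linear interpolator of discrete call prices
equals the put-payoff expansion `Σ_{i=1}^N pⁱ (Kⁱ - K)⁺` on `[0, Kᴺ)`. -/
theorem stmt_4 {N : ℕ} (K : ℕ → ℝ) (C : ℕ → ℝ)
    (hK0 : K 0 = 0) (hKmono : ∀ i < N, K i < K (i + 1))
    (hCN : C N = 0)
    (dC : ℕ → ℝ)
    (hdC : ∀ i < N, dC i = (C (i + 1) - C i) / (K (i + 1) - K i))
    (hdCN : dC N = 0)
    (p : ℕ → ℝ) (hp : ∀ i, 1 ≤ i → i ≤ N → p i = dC i - dC (i - 1)) :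
    ∀ i < N, ∀ x : ℝ, K i ≤ x → x < K (i + 1) →
      dC i * (x - K (i + 1)) + C (i + 1) = ∑ n ∈ Finset.Icc 1 N, p n * max (K n - x) 0 :=
  stmt_4_general K C hKmono hCN dC hdC hdCN p hp
end

section
/- Let G be a standard Gaussian random variable (law equal to the Gaussian measure on ℝ with mean 0 and variance 1), and let s > 0, v > 0, k > 0. Then E[(s·exp(√v·G − v/2) − k)⁺] = s·Φ(d₊) − k·Φ(d₋), where d± = (log(s/k) ± v/2)/√v and Φ is the standard normal CDF. -/
/-!
Multiplying the standard Gaussian density by `exp (a x - a² / 2)` shifts its mean to `a`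
(exponential tilting). After transferring the law of `G` to `ℝ`, the payoff is positive
exactly on a half-line `[c, ∞)`, so the expectation splits as
`s·N(a,1)[c, ∞) - k·N(0,1)[c, ∞)`, and the reflection `x ↦ μ - x` turns each Gaussian tail
into a value of `Φ`.
-/

open MeasureTheory ProbabilityTheory Real

noncomputable def stdNormalCDF (x : ℝ) : ℝ := ((gaussianReal 0 1) (Set.Iic x)).toReal

open Set
open scoped NNReal

lemma gaussianPDFReal_add_mul (μ a : ℝ) (v : ℝ≥0) (x : ℝ) :
    gaussianPDFReal (μ + v * a) v x
      = exp (a * (x - μ) - v * a ^ 2 / 2) * gaussianPDFReal μ v x := by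
  rcases eq_or_ne v 0 with rfl | hv
  · simp
  have hv' : (v : ℝ) ≠ 0 := mod_cast hv
  rw [gaussianPDFReal, gaussianPDFReal, mul_left_comm, ← exp_add]
  congr 2
  field_simp
  ring

lemma setIntegral_gaussianPDFReal (μ : ℝ) {v : ℝ≥0} (hv : v ≠ 0) (A : Set ℝ) :
    ∫ x in A, gaussianPDFReal μ v x = (gaussianReal μ v).real A := by
  rw [measureReal_def, gaussianReal_apply_eq_integral μ hv, ENNReal.toReal_ofReal]
  exact integral_nonneg (gaussianPDFReal_nonneg μ v)

lemma measureReal_gaussianReal_Ici (μ c : ℝ) :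
    (gaussianReal μ 1).real (Ici c) = stdNormalCDF (μ - c) := by
  have hpre : (μ - ·) ⁻¹' Ici c = Iic (μ - c) := by
    ext x
    simp only [mem_preimage, mem_Ici, mem_Iic]
    constructor <;> intro h <;> linarith
  rw [stdNormalCDF, ← measureReal_def, ← hpre, ← map_measureReal_apply (by fun_prop)
    measurableSet_Ici, gaussianReal_map_const_sub, sub_zero]

lemma le_mul_exp_iff {s k a x b : ℝ} (hs : 0 < s) (hk : 0 < k) (ha : 0 < a) :
    k ≤ s * exp (a * x - b) ↔ (log (k / s) + b) / a ≤ x := by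
  rw [← div_le_iff₀' hs, ← log_le_iff_le_exp (div_pos hk hs), div_le_iff₀ ha]
  constructor <;> intro h <;> linarith

theorem integral_max_mul_exp_sub_gaussianReal {s k a : ℝ} (hs : 0 < s) (hk : 0 < k)
    (ha : 0 < a) :
    ∫ x, max (s * exp (a * x - a ^ 2 / 2) - k) 0 ∂gaussianReal 0 1
      = s * stdNormalCDF ((log (s / k) + a ^ 2 / 2) / a)
        - k * stdNormalCDF ((log (s / k) - a ^ 2 / 2) / a) := by
  set c := (log (k / s) + a ^ 2 / 2) / a with hc
  have hpdf (x : ℝ) :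
      gaussianPDFReal a 1 x = exp (a * x - a ^ 2 / 2) * gaussianPDFReal 0 1 x := by
    simpa using gaussianPDFReal_add_mul 0 a 1 x
  have hpayoff (x : ℝ) : gaussianPDFReal 0 1 x • max (s * exp (a * x - a ^ 2 / 2) - k) 0
      = (Ici c).indicator (fun x ↦ s * gaussianPDFReal a 1 x - k * gaussianPDFReal 0 1 x) x := by
    by_cases hx : c ≤ x
    · rw [indicator_of_mem (mem_Ici.2 hx),
        max_eq_left (sub_nonneg.2 ((le_mul_exp_iff hs hk ha).2 hx)), hpdf, smul_eq_mul]
      ring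
    · rw [indicator_of_notMem (mt mem_Ici.1 hx), max_eq_right (sub_nonpos.2 (le_of_not_ge
        (mt (le_mul_exp_iff hs hk ha).1 hx))), smul_zero]
  have hint (μ : ℝ) : IntegrableOn (gaussianPDFReal μ 1) (Ici c) :=
    (integrable_gaussianPDFReal μ 1).integrableOn
  calc ∫ x, max (s * exp (a * x - a ^ 2 / 2) - k) 0 ∂gaussianReal 0 1
      = ∫ x in Ici c, s * gaussianPDFReal a 1 x - k * gaussianPDFReal 0 1 x := by
        rw [integral_gaussianReal_eq_integral_smul one_ne_zero,
          ← integral_indicator measurableSet_Ici]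
        simp_rw [hpayoff]
    _ = s * (gaussianReal a 1).real (Ici c) - k * (gaussianReal 0 1).real (Ici c) := by
        rw [integral_sub ((hint a).const_mul s) ((hint 0).const_mul k), integral_const_mul,
          integral_const_mul, setIntegral_gaussianPDFReal a one_ne_zero,
          setIntegral_gaussianPDFReal 0 one_ne_zero]
    _ = _ := by
        rw [measureReal_gaussianReal_Ici, measureReal_gaussianReal_Ici, hc,
          log_div hk.ne' hs.ne', log_div hs.ne' hk.ne']
        congr 3 <;> field_simp <;> ring

theorem stmt_6_general {Ω : Type*} {m0 : MeasurableSpace Ω} {P : Measure Ω}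
    (G : Ω → ℝ) (hG : Measurable G)
    (hlaw : P.map G = gaussianReal 0 1)
    (s v k : ℝ) (hs : 0 < s) (hv : 0 < v) (hk : 0 < k) :
    ∫ ω, max (s * Real.exp (Real.sqrt v * G ω - v / 2) - k) 0 ∂P
      = s * stdNormalCDF ((Real.log (s / k) + v / 2) / Real.sqrt v)
        - k * stdNormalCDF ((Real.log (s / k) - v / 2) / Real.sqrt v) := by
  obtain ⟨a, ha, rfl⟩ : ∃ a, 0 < a ∧ v = a ^ 2 :=
    ⟨√v, sqrt_pos.2 hv, (sq_sqrt hv.le).symm⟩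
  rw [sqrt_sq ha.le, ← integral_max_mul_exp_sub_gaussianReal hs hk ha, ← hlaw,
    integral_map hG.aemeasurable (by fun_prop)]

/-- `E[(s·exp(√v·G - v/2) - k)⁺] = s·Φ(d₊) - k·Φ(d₋)` for a standard
Gaussian random variable `G`, where `d± = (log(s/k) ± v/2)/√v`. -/
theorem stmt_6 {Ω : Type*} {m0 : MeasurableSpace Ω} {P : Measure Ω} [IsProbabilityMeasure P]
    (G : Ω → ℝ) (hG : Measurable G)
    (hlaw : P.map G = gaussianReal 0 1)
    (s v k : ℝ) (hs : 0 < s) (hv : 0 < v) (hk : 0 < k) :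
    ∫ ω, max (s * Real.exp (Real.sqrt v * G ω - v / 2) - k) 0 ∂P
      = s * stdNormalCDF ((Real.log (s / k) + v / 2) / Real.sqrt v)
        - k * stdNormalCDF ((Real.log (s / k) - v / 2) / Real.sqrt v) :=
  stmt_6_general (m0 := m0) G hG hlaw s v k hs hv hk
end

section
/- Fix s > 0 and v > 0. The map k ↦ Call(s,k,v) on (0,∞) is: (1) strictly decreasing; (2) strictly convex; (3) differentiable with derivative ∂_k Call(s,k,v) = −Φ(d₋) where d₋ = (log(s/k) − v/2)/√v, and this derivative lies in the open interval (−1, 0) for every k > 0; (4) lim_{k→0⁺} Call(s,k,v) = s; and (5) lim_{k→∞} Call(s,k,v) = 0. -/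
/-!
Differentiating in the strike, the two Gaussian-density terms of the chain rule cancel
because `s φ(d₊) = k φ(d₋)` (as `d₊² - d₋² = 2 log (s / k)`), leaving `-Φ(d₋)`. Since
`0 < Φ < 1` this lies in `(-1, 0)`, and since `d₋` decreases in `k` it increases strictly,
which gives strict monotonicity and strict convexity. As `k → 0⁺`, `d₊ → ∞` and
`0 ≤ k Φ(d₋) ≤ k`. As `k → ∞`, `d₊ → -∞`, and `k Φ(d₋) = s e^{-v/2} e^{-√v d₋} Φ(d₋) → 0`
by the Chernoff bound `Φ(x) ≤ e^{-t x + t² / 2}` for `t ≤ 0`.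
-/

open MeasureTheory ProbabilityTheory Real Filter Set

/-- The Black–Scholes call price `Call(s,k,v) = s·Φ(d₊) - k·Φ(d₋)`, with the
convention `Call(s,0,v) = s`. -/
noncomputable def Call (s k v : ℝ) : ℝ :=
  if k = 0 then s
  else s * stdNormalCDF ((Real.log (s / k) + v / 2) / Real.sqrt v)
       - k * stdNormalCDF ((Real.log (s / k) - v / 2) / Real.sqrt v)

open scoped NNReal Topology

namespace ProbabilityTheory

lemma cdf_gaussianReal_eq_integral (μ : ℝ) {v : ℝ≥0} (hv : v ≠ 0) (x : ℝ) :
    cdf (gaussianReal μ v) x = ∫ t in Iic x, gaussianPDFReal μ v t := by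
  rw [cdf_eq_real, measureReal_def, gaussianReal_apply_eq_integral μ hv,
    ENNReal.toReal_ofReal
      (setIntegral_nonneg measurableSet_Iic fun t _ ↦ gaussianPDFReal_nonneg μ v t)]

lemma hasDerivAt_cdf_gaussianReal (μ : ℝ) {v : ℝ≥0} (hv : v ≠ 0) (x : ℝ) :
    HasDerivAt (cdf (gaussianReal μ v)) (gaussianPDFReal μ v x) x := by
  have hcont : Continuous (gaussianPDFReal μ v) := by
    rw [gaussianPDFReal_def]; fun_prop
  have hint := integrable_gaussianPDFReal μ v
  have hcdf : ∀ y, cdf (gaussianReal μ v) y =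
      cdf (gaussianReal μ v) 0 + ∫ t in (0 : ℝ)..y, gaussianPDFReal μ v t := fun y ↦ by
    rw [cdf_gaussianReal_eq_integral μ hv, cdf_gaussianReal_eq_integral μ hv,
      ← intervalIntegral.integral_Iic_sub_Iic hint.integrableOn hint.integrableOn]
    ring
  rw [funext hcdf]
  exact (intervalIntegral.integral_hasDerivAt_right hint.intervalIntegrable
    (hcont.stronglyMeasurableAtFilter _ _) hcont.continuousAt).const_add _

lemma strictMono_cdf_gaussianReal (μ : ℝ) {v : ℝ≥0} (hv : v ≠ 0) :
    StrictMono (cdf (gaussianReal μ v)) :=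
  strictMono_of_hasDerivAt_pos (hasDerivAt_cdf_gaussianReal μ hv)
    fun x ↦ gaussianPDFReal_pos μ v x hv

end ProbabilityTheory

lemma stdNormalCDF_eq_cdf : stdNormalCDF = cdf (gaussianReal 0 1) := by
  ext x
  rw [stdNormalCDF, cdf_eq_real, measureReal_def]

lemma hasDerivAt_stdNormalCDF (x : ℝ) :
    HasDerivAt stdNormalCDF (gaussianPDFReal 0 1 x) x :=
  stdNormalCDF_eq_cdf ▸ hasDerivAt_cdf_gaussianReal 0 one_ne_zero x

lemma strictMono_stdNormalCDF : StrictMono stdNormalCDF :=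
  stdNormalCDF_eq_cdf ▸ strictMono_cdf_gaussianReal 0 one_ne_zero

lemma stdNormalCDF_pos (x : ℝ) : 0 < stdNormalCDF x :=
  (stdNormalCDF_eq_cdf ▸ cdf_nonneg _ (x - 1)).trans_lt (strictMono_stdNormalCDF (by linarith))

lemma stdNormalCDF_lt_one (x : ℝ) : stdNormalCDF x < 1 :=
  (strictMono_stdNormalCDF (lt_add_one x)).trans_le (stdNormalCDF_eq_cdf ▸ cdf_le_one _ _)

lemma stdNormalCDF_le_exp_mul (x : ℝ) {t : ℝ} (ht : t ≤ 0) :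
    stdNormalCDF x ≤ rexp (-t * x + t ^ 2 / 2) := by
  have h := measure_le_le_exp_mul_mgf (μ := gaussianReal 0 1) (X := id) x ht
    (integrable_exp_mul_gaussianReal t)
  rw [mgf_id_gaussianReal, ← Real.exp_add] at h
  simp only [id, zero_mul, zero_add, NNReal.coe_one, one_mul] at h
  exact h

lemma tendsto_exp_mul_stdNormalCDF_atBot (c : ℝ) :
    Tendsto (fun x ↦ rexp (c * x) * stdNormalCDF x) atBot (𝓝 0) := by
  have hbound (x : ℝ) :
      rexp (c * x) * stdNormalCDF x ≤ rexp ((c + |c| + 1) * x + (|c| + 1) ^ 2 / 2) :=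
    calc rexp (c * x) * stdNormalCDF x
        ≤ rexp (c * x) * rexp (-(-(|c| + 1)) * x + (-(|c| + 1)) ^ 2 / 2) := by
          gcongr
          exact stdNormalCDF_le_exp_mul x (by linarith [abs_nonneg c])
      _ = _ := by rw [← Real.exp_add]; ring_nf
  have hslope : 0 < c + |c| + 1 := by linarith [neg_abs_le c]
  have hlim : Tendsto (fun x ↦ rexp ((c + |c| + 1) * x + (|c| + 1) ^ 2 / 2)) atBot (𝓝 0) :=
    Real.tendsto_exp_atBot.comp <| tendsto_atBot_add_const_right _ _ <|
      tendsto_id.const_mul_atBot hslope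
  exact tendsto_of_tendsto_of_tendsto_of_le_of_le tendsto_const_nhds hlim
    (fun x ↦ (mul_pos (Real.exp_pos _) (stdNormalCDF_pos x)).le) hbound

lemma tendsto_stdNormalCDF_atTop : Tendsto stdNormalCDF atTop (𝓝 1) :=
  stdNormalCDF_eq_cdf ▸ tendsto_cdf_atTop _

lemma tendsto_stdNormalCDF_atBot : Tendsto stdNormalCDF atBot (𝓝 0) :=
  stdNormalCDF_eq_cdf ▸ tendsto_cdf_atBot _

namespace BlackScholes

noncomputable def dPlus (s k v : ℝ) : ℝ := (Real.log (s / k) + v / 2) / Real.sqrt v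

noncomputable def dMinus (s k v : ℝ) : ℝ := (Real.log (s / k) - v / 2) / Real.sqrt v

variable {s k v : ℝ}

lemma call_eq (hk : k ≠ 0) :
    Call s k v = s * stdNormalCDF (dPlus s k v) - k * stdNormalCDF (dMinus s k v) := by
  simp only [Call, if_neg hk, dPlus, dMinus]

lemma dMinus_eq_dPlus_sub (hv : 0 < v) : dMinus s k v = dPlus s k v - Real.sqrt v := by
  have hr : Real.sqrt v ≠ 0 := (Real.sqrt_pos.mpr hv).ne'
  rw [dMinus, dPlus, eq_sub_iff_add_eq, div_add' _ _ _ hr, Real.mul_self_sqrt hv.le]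
  ring_nf

lemma mul_gaussianPDFReal_dPlus (hs : 0 < s) (hk : 0 < k) (hv : 0 < v) :
    s * gaussianPDFReal 0 1 (dPlus s k v) = k * gaussianPDFReal 0 1 (dMinus s k v) := by
  have hsq : dPlus s k v ^ 2 = dMinus s k v ^ 2 + 2 * Real.log (s / k) := by
    have hdr : dPlus s k v * Real.sqrt v = Real.log (s / k) + v / 2 :=
      div_mul_cancel₀ _ (Real.sqrt_pos.mpr hv).ne'
    rw [dMinus_eq_dPlus_sub hv]
    linear_combination 2 * hdr - Real.sq_sqrt hv.le
  simp only [gaussianPDFReal, sub_zero, NNReal.coe_one, mul_one, neg_div]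
  rw [hsq, add_div, neg_add, Real.exp_add, mul_div_cancel_left₀ _ two_ne_zero,
    Real.exp_neg (Real.log _), Real.exp_log (div_pos hs hk)]
  field_simp

lemma hasDerivAt_log_div (hs : s ≠ 0) (hk : k ≠ 0) :
    HasDerivAt (fun x ↦ Real.log (s / x)) (-k⁻¹) k := by
  have h := ((hasDerivAt_inv hk).const_mul s).log (by simp [hs, hk])
  rwa [show s * -(k ^ 2)⁻¹ / (s * k⁻¹) = -k⁻¹ by field_simp] at h

lemma hasDerivAt_dPlus (hs : s ≠ 0) (hk : k ≠ 0) :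
    HasDerivAt (fun x ↦ dPlus s x v) (-k⁻¹ / Real.sqrt v) k :=
  ((hasDerivAt_log_div hs hk).add_const _).div_const _

lemma hasDerivAt_dMinus (hs : s ≠ 0) (hk : k ≠ 0) :
    HasDerivAt (fun x ↦ dMinus s x v) (-k⁻¹ / Real.sqrt v) k :=
  ((hasDerivAt_log_div hs hk).sub_const _).div_const _

lemma hasDerivAt_call (hs : 0 < s) (hk : 0 < k) (hv : 0 < v) :
    HasDerivAt (fun x ↦ Call s x v) (-stdNormalCDF (dMinus s k v)) k := by
  have hput := ((hasDerivAt_stdNormalCDF _).comp k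
    (hasDerivAt_dPlus (v := v) hs.ne' hk.ne')).const_mul s
  have hstrike := (hasDerivAt_id k).mul
    ((hasDerivAt_stdNormalCDF _).comp k (hasDerivAt_dMinus (v := v) hs.ne' hk.ne'))
  have hprice := hput.sub hstrike
  refine (hprice.congr_deriv ?_).congr_of_eventuallyEq ?_
  · simp only [id, Function.comp_apply]
    linear_combination (-k⁻¹ / Real.sqrt v) * mul_gaussianPDFReal_dPlus hs hk hv
  · filter_upwards [eventually_ne_nhds hk.ne'] with x hx using call_eq hx

lemma strictAntiOn_dMinus (hs : 0 < s) (hv : 0 < v) :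
    StrictAntiOn (fun k ↦ dMinus s k v) (Ioi 0) := fun a ha b _ hab ↦ by
  have hlog : Real.log (s / b) < Real.log (s / a) :=
    Real.log_lt_log (div_pos hs (ha.trans hab)) (div_lt_div_of_pos_left hs ha hab)
  simp only [dMinus]
  gcongr

lemma call_strictAntiOn (hs : 0 < s) (hv : 0 < v) :
    StrictAntiOn (fun k ↦ Call s k v) (Ioi 0) :=
  strictAntiOn_of_hasDerivWithinAt_neg (convex_Ioi 0)
    (fun k hk ↦ (hasDerivAt_call hs hk hv).continuousAt.continuousWithinAt)
    (fun k hk ↦ (hasDerivAt_call hs (by rwa [interior_Ioi] at hk) hv).hasDerivWithinAt)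
    fun _ _ ↦ neg_neg_of_pos (stdNormalCDF_pos _)

lemma call_strictConvexOn (hs : 0 < s) (hv : 0 < v) :
    StrictConvexOn ℝ (Ioi 0) (fun k ↦ Call s k v) := by
  refine StrictMonoOn.strictConvexOn_of_deriv (convex_Ioi 0)
    (fun k hk ↦ (hasDerivAt_call hs hk hv).continuousAt.continuousWithinAt) ?_
  rw [interior_Ioi]
  intro a ha b hb hab
  rw [(hasDerivAt_call hs ha hv).deriv, (hasDerivAt_call hs hb hv).deriv]
  exact neg_lt_neg (strictMono_stdNormalCDF (strictAntiOn_dMinus hs hv ha hb hab))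

lemma tendsto_dPlus_nhdsGT_zero (hs : 0 < s) (hv : 0 < v) :
    Tendsto (fun k ↦ dPlus s k v) (𝓝[>] 0) atTop := by
  have hratio : Tendsto (fun k ↦ s / k) (𝓝[>] 0) atTop := by
    simpa only [div_eq_mul_inv] using tendsto_inv_nhdsGT_zero.const_mul_atTop hs
  exact (tendsto_atTop_add_const_right _ _ (Real.tendsto_log_atTop.comp hratio)).atTop_div_const
    (Real.sqrt_pos.mpr hv)

lemma tendsto_dPlus_atTop (hs : 0 < s) (hv : 0 < v) :
    Tendsto (fun k ↦ dPlus s k v) atTop atBot := by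
  have hratio : Tendsto (fun k ↦ s / k) atTop (𝓝[>] 0) :=
    tendsto_nhdsWithin_iff.mpr ⟨tendsto_const_nhds.div_atTop tendsto_id,
      (eventually_gt_atTop 0).mono fun _ hk ↦ div_pos hs hk⟩
  exact (tendsto_atBot_add_const_right _ _
    (Real.tendsto_log_nhdsGT_zero.comp hratio)).atBot_div_const (Real.sqrt_pos.mpr hv)

lemma tendsto_dMinus_atTop (hs : 0 < s) (hv : 0 < v) :
    Tendsto (fun k ↦ dMinus s k v) atTop atBot := by
  simpa only [dMinus_eq_dPlus_sub hv, sub_eq_add_neg] using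
    tendsto_atBot_add_const_right _ _ (tendsto_dPlus_atTop hs hv)

lemma tendsto_call_nhdsGT_zero (hs : 0 < s) (hv : 0 < v) :
    Tendsto (fun k ↦ Call s k v) (𝓝[>] 0) (𝓝 s) := by
  have hput : Tendsto (fun k ↦ s * stdNormalCDF (dPlus s k v)) (𝓝[>] 0) (𝓝 (s * 1)) :=
    (tendsto_stdNormalCDF_atTop.comp (tendsto_dPlus_nhdsGT_zero hs hv)).const_mul s
  have hstrike : Tendsto (fun k ↦ k * stdNormalCDF (dMinus s k v)) (𝓝[>] 0) (𝓝 0) := by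
    refine squeeze_zero' ?_ ?_ (tendsto_nhdsWithin_of_tendsto_nhds tendsto_id)
    · filter_upwards [self_mem_nhdsWithin] with k (hk : 0 < k)
      exact mul_nonneg hk.le (stdNormalCDF_pos _).le
    · filter_upwards [self_mem_nhdsWithin] with k (hk : 0 < k)
      exact mul_le_of_le_one_right hk.le (stdNormalCDF_lt_one _).le
  have hlim := hput.sub hstrike
  rw [mul_one, sub_zero] at hlim
  refine hlim.congr' ?_
  filter_upwards [self_mem_nhdsWithin] with k (hk : 0 < k) using (call_eq hk.ne').symm

lemma exp_neg_sqrt_mul_dMinus (hs : 0 < s) (hk : 0 < k) (hv : 0 < v) :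
    rexp (-Real.sqrt v * dMinus s k v) = k / s * rexp (v / 2) := by
  rw [dMinus, neg_mul, mul_div_cancel₀ _ (Real.sqrt_pos.mpr hv).ne', neg_sub, Real.exp_sub,
    Real.exp_log (div_pos hs hk)]
  field_simp

lemma tendsto_call_atTop (hs : 0 < s) (hv : 0 < v) :
    Tendsto (fun k ↦ Call s k v) atTop (𝓝 0) := by
  have hput : Tendsto (fun k ↦ s * stdNormalCDF (dPlus s k v)) atTop (𝓝 (s * 0)) :=
    (tendsto_stdNormalCDF_atBot.comp (tendsto_dPlus_atTop hs hv)).const_mul s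
  have hstrike :
      Tendsto (fun k ↦ k * stdNormalCDF (dMinus s k v)) atTop (𝓝 (s * rexp (-(v / 2)) * 0)) := by
    refine (((tendsto_exp_mul_stdNormalCDF_atBot (-Real.sqrt v)).comp
      (tendsto_dMinus_atTop hs hv)).const_mul (s * rexp (-(v / 2)))).congr' ?_
    filter_upwards [eventually_gt_atTop 0] with k hk
    simp only [Function.comp_apply, exp_neg_sqrt_mul_dMinus hs hk hv, Real.exp_neg]
    field_simp
  have hlim := hput.sub hstrike
  rw [mul_zero, mul_zero, sub_zero] at hlim
  refine hlim.congr' ?_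
  filter_upwards [eventually_gt_atTop 0] with k hk using (call_eq hk.ne').symm

end BlackScholes

/-- properties of `k ↦ Call(s,k,v)` on `(0,∞)` for fixed `s,v > 0`:
strictly decreasing, strictly convex, differentiable with derivative `-Φ(d₋) ∈ (-1,0)`,
tends to `s` as `k → 0⁺` and to `0` as `k → ∞`. -/
theorem stmt_7 (s v : ℝ) (hs : 0 < s) (hv : 0 < v) :
    StrictAntiOn (fun k => Call s k v) (Ioi 0) ∧
    StrictConvexOn ℝ (Ioi 0) (fun k => Call s k v) ∧
    (∀ k : ℝ, 0 < k →
      HasDerivAt (fun k' => Call s k' v)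
        (-(stdNormalCDF ((Real.log (s / k) - v / 2) / Real.sqrt v))) k ∧
      -(stdNormalCDF ((Real.log (s / k) - v / 2) / Real.sqrt v)) ∈ Ioo (-1 : ℝ) 0) ∧
    Tendsto (fun k => Call s k v) (nhdsWithin 0 (Ioi 0)) (nhds s) ∧
    Tendsto (fun k => Call s k v) atTop (nhds 0) :=
  ⟨BlackScholes.call_strictAntiOn hs hv, BlackScholes.call_strictConvexOn hs hv,
    fun _ hk ↦ ⟨BlackScholes.hasDerivAt_call hs hk hv,
      neg_lt_neg (stdNormalCDF_lt_one _), neg_neg_of_pos (stdNormalCDF_pos _)⟩,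
    BlackScholes.tendsto_call_nhdsGT_zero hs hv, BlackScholes.tendsto_call_atTop hs hv⟩
end

section
/- Fix s > 0. Then sup_{k > 0} |Call(s,k,v) − (s − k)⁺| → 0 as v → 0⁺, i.e., for every ε > 0 there exists v₀ > 0 such that for all v ∈ (0, v₀] and all k > 0, |Call(s,k,v) − (s − k)⁺| < ε. -/
/-! With `w = √v` and `d = d₋`, the call price is `s Φ(d + w) - k Φ(d)`, where
`exp(d w + w²/2) = s/k`. The Gaussian shift inequality `Φ(a) ≤ exp(a w + w²/2) Φ(a + w)` for
`w ≥ 0`, applied at `a = d` and at `a = -(d + w)`, gives `(s - k)⁺ ≤ Call`. Since the standard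
normal density is at most `1`, `Φ(d + w) - Φ(d) ≤ w`, hence `Call ≤ (s - k)⁺ + s √v`, a bound
uniform in `k`. -/

open MeasureTheory ProbabilityTheory Real Filter Set

lemma stdNormalCDF_eq_measureReal (x : ℝ) :
    stdNormalCDF x = (gaussianReal 0 1).real (Iic x) := rfl

lemma stdNormalCDF_nonneg (x : ℝ) : 0 ≤ stdNormalCDF x := measureReal_nonneg

lemma stdNormalCDF_le_one (x : ℝ) : stdNormalCDF x ≤ 1 := by
  rw [stdNormalCDF_eq_measureReal, ← cdf_eq_real]
  exact cdf_le_one _ x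

lemma stdNormalCDF_eq_integral (x : ℝ) :
    stdNormalCDF x = ∫ u in Iic x, gaussianPDFReal 0 1 u := by
  rw [stdNormalCDF, gaussianReal_apply_eq_integral 0 one_ne_zero,
    ENNReal.toReal_ofReal (setIntegral_nonneg measurableSet_Iic
      fun u _ => gaussianPDFReal_nonneg 0 1 u)]

lemma stdNormalCDF_neg (x : ℝ) : stdNormalCDF (-x) = 1 - stdNormalCDF x := by
  have := nullSingletonClass_gaussianReal (μ := 0) one_ne_zero
  have h := congrArg (fun μ : Measure ℝ => μ.real (Iic (-x)))
    (gaussianReal_map_neg (μ := 0) (v := 1))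
  simp only [neg_zero] at h
  rw [stdNormalCDF_eq_measureReal, stdNormalCDF_eq_measureReal, ← h,
    map_measureReal_apply measurable_neg measurableSet_Iic, Set.neg_preimage, Set.neg_Iic,
    neg_neg, ← measureReal_congr Ioi_ae_eq_Ici, ← compl_Iic, probReal_compl_eq_one_sub measurableSet_Iic]

lemma gaussianPDFReal_zero_one_le_one (u : ℝ) : gaussianPDFReal 0 1 u ≤ 1 := by
  have hexp : rexp (-(u - 0) ^ 2 / (2 * 1)) ≤ 1 := by
    rw [Real.exp_le_one_iff]; nlinarith [sq_nonneg u]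
  have hsqrt : (√(2 * π * 1))⁻¹ ≤ 1 := by
    rw [inv_le_one_iff₀, Real.one_le_sqrt]; right; nlinarith [Real.pi_gt_three]
  simp only [gaussianPDFReal, NNReal.coe_one]
  nlinarith [Real.exp_pos (-(u - 0) ^ 2 / (2 * 1)), inv_nonneg.2 (Real.sqrt_nonneg (2 * π * 1))]

lemma stdNormalCDF_sub_le {a b : ℝ} (hab : a ≤ b) : stdNormalCDF b - stdNormalCDF a ≤ b - a := by
  have hint := (integrable_gaussianPDFReal 0 1).integrableOn (s := Iic a)
  rw [stdNormalCDF_eq_integral, stdNormalCDF_eq_integral,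
    intervalIntegral.integral_Iic_sub_Iic hint (integrable_gaussianPDFReal 0 1).integrableOn]
  calc ∫ u in a..b, gaussianPDFReal 0 1 u ≤ ∫ _ in a..b, (1 : ℝ) :=
        intervalIntegral.integral_mono_on hab (integrable_gaussianPDFReal 0 1).intervalIntegrable
          intervalIntegrable_const fun u _ => gaussianPDFReal_zero_one_le_one u
    _ = b - a := by simp

lemma gaussianPDFReal_zero_one_eq_exp_mul (t w : ℝ) :
    gaussianPDFReal 0 1 t = rexp (t * w + w ^ 2 / 2) * gaussianPDFReal 0 1 (t + w) := by
  simp only [gaussianPDFReal, NNReal.coe_one, mul_left_comm (rexp _), ← Real.exp_add]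
  ring_nf

lemma setIntegral_Iic_comp_add_right {E : Type*} [NormedAddCommGroup E] [NormedSpace ℝ E]
    (f : ℝ → E) (a w : ℝ) :
    ∫ x in Iic a, f (x + w) = ∫ x in Iic (a + w), f x := by
  have := (measurePreserving_add_right volume w).setIntegral_preimage_emb
    (measurableEmbedding_addRight w) f (Iic (a + w))
  simpa using this

lemma stdNormalCDF_le_exp_mul_stdNormalCDF_add (a : ℝ) {w : ℝ} (hw : 0 ≤ w) :
    stdNormalCDF a ≤ rexp (a * w + w ^ 2 / 2) * stdNormalCDF (a + w) := by
  rw [stdNormalCDF_eq_integral, stdNormalCDF_eq_integral, ← setIntegral_Iic_comp_add_right,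
    ← integral_const_mul]
  refine setIntegral_mono_on (integrable_gaussianPDFReal 0 1).integrableOn
    (((integrable_gaussianPDFReal 0 1).comp_add_right w).const_mul _).integrableOn
    measurableSet_Iic fun t (ht : t ≤ a) => ?_
  rw [gaussianPDFReal_zero_one_eq_exp_mul t w]
  gcongr
  exact gaussianPDFReal_nonneg 0 1 _

lemma max_sub_zero_le_mul_stdNormalCDF_sub {s k d w : ℝ} (hs : 0 < s) (hk : 0 < k)
    (hw : 0 ≤ w) (hd : rexp (d * w + w ^ 2 / 2) = s / k) :
    max (s - k) 0 ≤ s * stdNormalCDF (d + w) - k * stdNormalCDF d := by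
  have hlow : k * stdNormalCDF d ≤ s * stdNormalCDF (d + w) := by
    have := stdNormalCDF_le_exp_mul_stdNormalCDF_add d hw
    rw [hd] at this
    calc k * stdNormalCDF d ≤ k * (s / k * stdNormalCDF (d + w)) := by gcongr
      _ = s * stdNormalCDF (d + w) := by field_simp
  have hhigh : s * (1 - stdNormalCDF (d + w)) ≤ k * (1 - stdNormalCDF d) := by
    have := stdNormalCDF_le_exp_mul_stdNormalCDF_add (-(d + w)) hw
    rw [show -(d + w) * w + w ^ 2 / 2 = -(d * w + w ^ 2 / 2) by ring, Real.exp_neg, hd, inv_div,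
      show -(d + w) + w = -d by ring, stdNormalCDF_neg, stdNormalCDF_neg] at this
    calc s * (1 - stdNormalCDF (d + w)) ≤ s * (k / s * (1 - stdNormalCDF d)) := by gcongr
      _ = k * (1 - stdNormalCDF d) := by field_simp
  exact max_le (by linarith) (by linarith)

lemma mul_stdNormalCDF_sub_le {s k d w : ℝ} (hs : 0 ≤ s) (hw : 0 ≤ w) :
    s * stdNormalCDF (d + w) - k * stdNormalCDF d ≤ max (s - k) 0 + s * w := by
  have hlip : s * (stdNormalCDF (d + w) - stdNormalCDF d) ≤ s * w := by
    gcongr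
    simpa using stdNormalCDF_sub_le (le_add_of_nonneg_right hw)
  rcases le_total k s with hks | hsk
  · nlinarith [le_max_left (s - k) 0, stdNormalCDF_le_one d]
  · nlinarith [le_max_right (s - k) 0, stdNormalCDF_nonneg d]

lemma abs_Call_sub_max_le {s k v : ℝ} (hs : 0 < s) (hk : 0 < k) (hv : 0 < v) :
    |Call s k v - max (s - k) 0| ≤ s * √v := by
  set d := (Real.log (s / k) - v / 2) / √v
  have hw : 0 < √v := Real.sqrt_pos.2 hv
  have hdw : d + √v = (Real.log (s / k) + v / 2) / √v := by
    rw [eq_div_iff hw.ne', add_mul, div_mul_cancel₀ _ hw.ne', Real.mul_self_sqrt hv.le]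
    ring
  have hd : rexp (d * √v + √v ^ 2 / 2) = s / k := by
    rw [div_mul_cancel₀ _ hw.ne', Real.sq_sqrt hv.le, sub_add_cancel,
      Real.exp_log (div_pos hs hk)]
  have hCall : Call s k v = s * stdNormalCDF (d + √v) - k * stdNormalCDF d := by
    rw [Call, if_neg hk.ne', hdw]
  rw [hCall, abs_le]
  constructor
  · linarith [max_sub_zero_le_mul_stdNormalCDF_sub hs hk hw.le hd, mul_nonneg hs.le hw.le]
  · linarith [mul_stdNormalCDF_sub_le (k := k) (d := d) hs.le hw.le]

/-- for fixed `s > 0`, `Call(s,·,v)` converges uniformly on `(0,∞)`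
to the intrinsic value `(s-k)⁺` as `v → 0⁺`. -/
theorem stmt_9 (s : ℝ) (hs : 0 < s) :
    ∀ ε > (0 : ℝ), ∃ v₀ > (0 : ℝ), ∀ v, 0 < v → v ≤ v₀ →
      ∀ k > (0 : ℝ), |Call s k v - max (s - k) 0| < ε := by
  intro ε hε
  refine ⟨(ε / (2 * s)) ^ 2, by positivity, fun v hv hvv₀ k hk => ?_⟩
  have hsqrt : √v ≤ ε / (2 * s) := (Real.sqrt_le_left (by positivity)).2 hvv₀
  calc |Call s k v - max (s - k) 0| ≤ s * √v := abs_Call_sub_max_le hs hk hv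
    _ ≤ s * (ε / (2 * s)) := by gcongr
    _ < ε := by field_simp; linarith
end

section
/- Let M ∈ ℝ^{N×N} be a matrix whose columns each sum to 1 (Σ_{i=1}^{N} M_{i,ℓ} = 1 for every ℓ) and whose off-diagonal entries are nonpositive (M_{i,ℓ} ≤ 0 for i ≠ ℓ). Then M is invertible, every entry of M⁻¹ is nonnegative, and every column of M⁻¹ sums to 1. Moreover, if additionally there is a vector K ∈ ℝᴺ with Σ_{i=1}^{N} Kⁱ·M_{i,ℓ} = K^ℓ for every ℓ, then Σ_{i=1}^{N} Kⁱ·(M⁻¹)_{i,ℓ} = K^ℓ for every ℓ. -/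
/-!
Discrete minimum principle: at a coordinate `j` where a row vector `y` is minimal, the nonpositive
off-diagonal entries give `(y ᵥ* M) j = ∑ₖ yₖ Mₖⱼ ≤ yⱼ ∑ₖ Mₖⱼ = yⱼ`. Hence `y ᵥ* M ≥ 0` forces
`y ≥ 0`, so `y ↦ y ᵥ* M` is order-reflecting, in particular injective, and `M` is invertible.
Each row of `M⁻¹` is mapped by `M` to a row of `1`, which is nonnegative, so it is nonnegative. A
row vector fixed by `M` is fixed by `M⁻¹`; the constant vector `1` gives the column sums of `M⁻¹`.
-/

open Finset Matrix

namespace Matrix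

section MinimumPrinciple

variable {ι R : Type*} [Fintype ι] [CommRing R] [LinearOrder R] [IsStrictOrderedRing R]
  {M : Matrix ι ι R}

theorem exists_forall_le_vecMul_apply_le (hcol : ∀ l, ∑ i, M i l = 1) (hoff : ∀ i l, i ≠ l → M i l ≤ 0)
    [Nonempty ι] (y : ι → R) : ∃ j, (∀ k, y j ≤ y k) ∧ (y ᵥ* M) j ≤ y j := by
  obtain ⟨j, hmin⟩ := Finite.exists_min y
  refine ⟨j, hmin, ?_⟩
  have hterm : ∀ k, y k * M k j ≤ y j * M k j := fun k => by
    rcases eq_or_ne k j with rfl | hk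
    · exact le_rfl
    · exact mul_le_mul_of_nonpos_right (hmin k) (hoff k j hk)
  calc (y ᵥ* M) j = ∑ k, y k * M k j := rfl
    _ ≤ ∑ k, y j * M k j := sum_le_sum fun k _ => hterm k
    _ = y j := by rw [← mul_sum, hcol, mul_one]

theorem nonneg_of_nonneg_vecMul (hcol : ∀ l, ∑ i, M i l = 1)
    (hoff : ∀ i l, i ≠ l → M i l ≤ 0) {y : ι → R} (hy : 0 ≤ y ᵥ* M) : 0 ≤ y := fun k => by
  have : Nonempty ι := ⟨k⟩
  obtain ⟨j, hmin, hj⟩ := exists_forall_le_vecMul_apply_le hcol hoff y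
  exact ((hy j).trans hj).trans (hmin k)

theorem le_of_vecMul_le (hcol : ∀ l, ∑ i, M i l = 1) (hoff : ∀ i l, i ≠ l → M i l ≤ 0)
    {y z : ι → R} (h : y ᵥ* M ≤ z ᵥ* M) : y ≤ z := by
  have := nonneg_of_nonneg_vecMul hcol hoff (y := z - y) (by rwa [sub_vecMul, sub_nonneg])
  rwa [sub_nonneg] at this

theorem vecMul_injective_of_sum_col_eq_one (hcol : ∀ l, ∑ i, M i l = 1)
    (hoff : ∀ i l, i ≠ l → M i l ≤ 0) : Function.Injective M.vecMul := fun _ _ h =>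
  le_antisymm (le_of_vecMul_le hcol hoff h.le) (le_of_vecMul_le hcol hoff h.ge)

end MinimumPrinciple

section Inverse

variable {ι K : Type*} [Fintype ι] [DecidableEq ι] [Field K] [LinearOrder K]
  [IsStrictOrderedRing K] {M : Matrix ι ι K}

theorem isUnit_of_sum_col_eq_one (hcol : ∀ l, ∑ i, M i l = 1)
    (hoff : ∀ i l, i ≠ l → M i l ≤ 0) : IsUnit M :=
  vecMul_injective_iff_isUnit.1 (vecMul_injective_of_sum_col_eq_one hcol hoff)

theorem inv_nonneg_of_sum_col_eq_one (hcol : ∀ l, ∑ i, M i l = 1)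
    (hoff : ∀ i l, i ≠ l → M i l ≤ 0) (i l : ι) : 0 ≤ M⁻¹ i l := by
  have hdet : IsUnit M.det := (isUnit_iff_isUnit_det M).1 (isUnit_of_sum_col_eq_one hcol hoff)
  refine nonneg_of_nonneg_vecMul hcol hoff (y := M⁻¹ i) ?_ l
  rw [← mul_apply_eq_vecMul, nonsing_inv_mul M hdet]
  intro k
  rw [one_apply]
  split_ifs <;> simp

end Inverse

theorem vecMul_inv_eq_self_of_vecMul_eq_self {ι R : Type*} [Fintype ι] [DecidableEq ι]
    [CommRing R] {M : Matrix ι ι R} (hM : IsUnit M) {v : ι → R} (hv : v ᵥ* M = v) :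
    v ᵥ* M⁻¹ = v := by
  have hdet : IsUnit M.det := (isUnit_iff_isUnit_det M).1 hM
  calc v ᵥ* M⁻¹ = (v ᵥ* M) ᵥ* M⁻¹ := by rw [hv]
    _ = v := by rw [vecMul_vecMul, mul_nonsing_inv M hdet, vecMul_one]

end Matrix

/-- a matrix with columns summing to 1 and nonpositive off-diagonal
entries is invertible, its inverse is nonnegative with columns summing to 1, and
the inverse inherits the martingale property `Σ_i Kⁱ M_{i,ℓ} = K^ℓ`. -/
theorem stmt_15 {N : ℕ} (M : Matrix (Fin N) (Fin N) ℝ)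
    (hcol : ∀ l, ∑ i, M i l = 1)
    (hoff : ∀ i l, i ≠ l → M i l ≤ 0) :
    IsUnit M ∧
    (∀ i l, 0 ≤ M⁻¹ i l) ∧
    (∀ l, ∑ i, M⁻¹ i l = 1) ∧
    (∀ K : Fin N → ℝ, (∀ l, ∑ i, K i * M i l = K l) → ∀ l, ∑ i, K i * M⁻¹ i l = K l) := by
  have hM := isUnit_of_sum_col_eq_one hcol hoff
  have hfix : ∀ K : Fin N → ℝ, (∀ l, ∑ i, K i * M i l = K l) →
      ∀ l, ∑ i, K i * M⁻¹ i l = K l := fun K hK =>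
    congrFun (vecMul_inv_eq_self_of_vecMul_eq_self hM (funext hK : K ᵥ* M = K))
  refine ⟨hM, inv_nonneg_of_sum_col_eq_one hcol hoff, fun l => ?_, hfix⟩
  simpa using hfix 1 (by simpa using hcol) l
end

section
/- Let 0 < K¹ < ⋯ < Kᴺ be real numbers, let T_{j−1} < T_j, and let Σ², …, Σ^{N−1} be nonnegative reals (discrete local volatilities). Define γ^{i+} := 1/((½(K^{i+1} − K^{i−1}))·(K^{i+1} − Kⁱ)) and γ^{i−} := 1/((½(K^{i+1} − K^{i−1}))·(Kⁱ − K^{i−1})), and w^{i±} := ½·(Σⁱ·Kⁱ)²·(T_j − T_{j−1})·γ^{i±} for 2 ≤ i ≤ N−1, with w^{1±} = w^{N±} := 0. Let M ∈ ℝ^{N×N} be the tridiagonal matrix whose column ℓ has diagonal entry 1 + w^{ℓ−} + w^{ℓ+}, entry −w^{ℓ−} in row ℓ−1, entry −w^{ℓ+} in row ℓ+1, and zeros elsewhere. Then M is invertible and Q := M⁻¹ is a martingale transition operator with respect to K = (K¹,…,Kᴺ): Q has nonnegative entries, each column of Q sums to 1, and Σ_{i=1}^{N} Kⁱ·Q_{i,ℓ}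 = K^ℓ for every ℓ. -/
/-!
The row-vector map `y ↦ y ᵥ* M` of the implicit matrix satisfies a discrete minimum principle:
`M` has nonpositive off-diagonal entries and unit column sums, so at an index where `y` is
minimal `(y ᵥ* M)ₗ = yₗ + ∑ (−Mᵢₗ)(yₗ − yᵢ) ≤ yₗ`. Hence `y ᵥ* M ≥ 0` forces `y ≥ 0`, which
makes `M` invertible and `M⁻¹` entrywise nonnegative. The vectors `1` and `K` are fixed by
`M` (for `K` because `w^{i−}(Kⁱ − K^{i−1}) = w^{i+}(K^{i+1} − Kⁱ)`), hence also by `M⁻¹`.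
-/

open Finset Matrix

theorem vecMul_nonsing_inv_of_vecMul_eq {n R : Type*} [Fintype n] [DecidableEq n] [CommRing R]
    {M : Matrix n n R} (hM : IsUnit M) {v : n → R} (hv : v ᵥ* M = v) : v ᵥ* M⁻¹ = v := by
  conv_lhs => rw [← hv, vecMul_vecMul, mul_nonsing_inv M ((isUnit_iff_isUnit_det M).1 hM),
    vecMul_one]

section MinimumPrinciple

variable {n R : Type*} [Fintype n] [Field R] [LinearOrder R] [IsStrictOrderedRing R]
  {M : Matrix n n R}

theorem nonneg_of_nonneg_vecMul (hoff : ∀ i j, i ≠ j → M i j ≤ 0) (hcol : ∀ j, 0 < ∑ i, M i j)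
    {y : n → R} (hy : 0 ≤ y ᵥ* M) : 0 ≤ y := by
  by_contra hneg
  obtain ⟨i₀, hi₀⟩ : ∃ i, y i < 0 := by simpa [Pi.le_def] using hneg
  obtain ⟨j, -, hj⟩ := exists_min_image univ y ⟨i₀, mem_univ i₀⟩
  have hsplit : (y ᵥ* M) j = y j * ∑ i, M i j + ∑ i, (y i - y j) * M i j := by
    simp only [vecMul, dotProduct, mul_sum, ← sum_add_distrib]
    exact sum_congr rfl fun i _ => by ring
  have hdiag : y j * ∑ i, M i j < 0 :=
    mul_neg_of_neg_of_pos ((hj i₀ (mem_univ _)).trans_lt hi₀) (hcol j)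
  have hrest : ∑ i, (y i - y j) * M i j ≤ 0 := by
    refine sum_nonpos fun i _ => ?_
    rcases eq_or_ne i j with rfl | hij
    · simp
    · exact mul_nonpos_of_nonneg_of_nonpos (sub_nonneg.2 (hj i (mem_univ _))) (hoff i j hij)
  linarith [show 0 ≤ (y ᵥ* M) j from hy j]

theorem isUnit_of_offDiag_nonpos [DecidableEq n] (hoff : ∀ i j, i ≠ j → M i j ≤ 0)
    (hcol : ∀ j, 0 < ∑ i, M i j) : IsUnit M := by
  rw [← vecMul_injective_iff_isUnit]
  intro u v huv
  have hle : ∀ u v : n → R, u ᵥ* M = v ᵥ* M → u ≤ v := fun u v h =>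
    sub_nonneg.1 (nonneg_of_nonneg_vecMul hoff hcol (by rw [sub_vecMul, h, sub_self]))
  exact le_antisymm (hle u v huv) (hle v u huv.symm)

theorem inv_nonneg_of_offDiag_nonpos [DecidableEq n] (hoff : ∀ i j, i ≠ j → M i j ≤ 0)
    (hcol : ∀ j, 0 < ∑ i, M i j) (i j : n) : 0 ≤ M⁻¹ i j := by
  have hunit := (isUnit_iff_isUnit_det M).1 (isUnit_of_offDiag_nonpos hoff hcol)
  have hrow : M⁻¹ i ᵥ* M = (1 : Matrix n n R) i := by
    rw [← nonsing_inv_mul M hunit]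
    rfl
  refine nonneg_of_nonneg_vecMul hoff hcol ?_ j
  rw [hrow]
  intro k
  rw [Pi.zero_apply, one_apply]
  split_ifs <;> norm_num

def IsMartingaleTransition (K : n → R) (P : Matrix n n R) : Prop :=
  (∀ i j, 0 ≤ P i j) ∧ 1 ᵥ* P = 1 ∧ K ᵥ* P = K

theorem isUnit_and_isMartingaleTransition_inv [DecidableEq n] {K : n → R}
    (hoff : ∀ i j, i ≠ j → M i j ≤ 0) (hone : 1 ᵥ* M = 1) (hK : K ᵥ* M = K) :
    IsUnit M ∧ IsMartingaleTransition K M⁻¹ := by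
  have hcol : ∀ j, 0 < ∑ i, M i j := fun j => by
    have hsum := congrFun hone j
    simp only [vecMul, one_dotProduct, Pi.one_apply] at hsum
    exact hsum ▸ zero_lt_one
  have hunit := isUnit_of_offDiag_nonpos hoff hcol
  exact ⟨hunit, inv_nonneg_of_offDiag_nonpos hoff hcol, vecMul_nonsing_inv_of_vecMul_eq hunit hone,
    vecMul_nonsing_inv_of_vecMul_eq hunit hK⟩

end MinimumPrinciple

/-- The `Fin N` index `l` stands for the paper's label `l + 1`. -/
def implicitMatrix (N : ℕ) (wm wp : ℕ → ℝ) : Matrix (Fin N) (Fin N) ℝ := fun i l =>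
  if (i : ℕ) = (l : ℕ) then 1 + wm ((l : ℕ) + 1) + wp ((l : ℕ) + 1)
  else if (i : ℕ) + 1 = (l : ℕ) then -(wm ((l : ℕ) + 1))
  else if (i : ℕ) = (l : ℕ) + 1 then -(wp ((l : ℕ) + 1))
  else 0

section ImplicitMatrix

variable {N : ℕ} {wm wp : ℕ → ℝ}

theorem implicitMatrix_apply_nonpos (hwm : ∀ m, 1 ≤ m → m ≤ N → 0 ≤ wm m)
    (hwp : ∀ m, 1 ≤ m → m ≤ N → 0 ≤ wp m) (i l : Fin N) (hil : i ≠ l) :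
    implicitMatrix N wm wp i l ≤ 0 := by
  have := hwm (l + 1) (by omega) l.isLt
  have := hwp (l + 1) (by omega) l.isLt
  unfold implicitMatrix
  split_ifs with h <;> first | exact absurd (Fin.ext h) hil | linarith

theorem vecMul_implicitMatrix_apply (hwm1 : wm 1 = 0) (hwpN : wp N = 0) (c : ℕ → ℝ)
    (l : Fin N) :
    ((fun i : Fin N => c (i + 1)) ᵥ* implicitMatrix N wm wp) l =
      c (l + 1) - wm (l + 1) * (c l - c (l + 1)) - wp (l + 1) * (c (l + 2) - c (l + 1)) := by
  obtain ⟨l, hl⟩ := l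
  simp only [vecMul, dotProduct, implicitMatrix]
  rw [Fin.sum_univ_eq_sum_range (fun x => c (x + 1) * if x = l then 1 + wm (l + 1) + wp (l + 1)
    else if x + 1 = l then -wm (l + 1) else if x = l + 1 then -wp (l + 1) else 0)]
  have hsplit : ∀ x, (c (x + 1) * if x = l then 1 + wm (l + 1) + wp (l + 1)
      else if x + 1 = l then -wm (l + 1) else if x = l + 1 then -wp (l + 1) else 0) =
      (if x = l then c (l + 1) * (1 + wm (l + 1) + wp (l + 1)) else 0)
        - (if x + 1 = l then wm (l + 1) * c l else 0)
        - (if x = l + 1 then wp (l + 1) * c (l + 2) else 0) := by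
    intro x
    split_ifs <;> subst_vars <;> first | omega | ring
  have hbelow : (∑ x ∈ range N, if x + 1 = l then wm (l + 1) * c l else 0) = wm (l + 1) * c l := by
    rcases l with _ | k
    · simp [hwm1]
    · simp [sum_ite_eq', hl.trans' k.lt_succ_self]
  have habove : (if l + 1 < N then wp (l + 1) * c (l + 2) else 0) = wp (l + 1) * c (l + 2) := by
    split_ifs with h
    · rfl
    · simp [show l + 1 = N by omega, hwpN]
  simp only [hsplit, sum_sub_distrib, sum_ite_eq', mem_range, if_pos hl, hbelow, habove]
  ring

theorem one_vecMul_implicitMatrix (hwm1 : wm 1 = 0) (hwpN : wp N = 0) :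
    1 ᵥ* implicitMatrix N wm wp = 1 := by
  ext l
  exact (vecMul_implicitMatrix_apply hwm1 hwpN (fun _ => 1) l).trans (by simp)

theorem vecMul_implicitMatrix_of_balance (hwm1 : wm 1 = 0) (hwpN : wp N = 0) (K : ℕ → ℝ)
    (hbal : ∀ m, 1 ≤ m → m ≤ N → wm m * (K m - K (m - 1)) = wp m * (K (m + 1) - K m)) :
    (fun i : Fin N => K (i + 1)) ᵥ* implicitMatrix N wm wp = fun i : Fin N => K (i + 1) := by
  ext l
  have := hbal (l + 1) (by omega) l.isLt
  simp only [add_tsub_cancel_right] at this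
  rw [vecMul_implicitMatrix_apply hwm1 hwpN]
  linear_combination this

end ImplicitMatrix

theorem implicitWeights_nonneg_and_balance {a b c s : ℝ} (hab : a < b) (hbc : b < c)
    (hs : 0 ≤ s) :
    0 ≤ s * (1 / (1 / 2 * (c - a) * (b - a))) ∧ 0 ≤ s * (1 / (1 / 2 * (c - a) * (c - b))) ∧
      s * (1 / (1 / 2 * (c - a) * (b - a))) * (b - a) =
        s * (1 / (1 / 2 * (c - a) * (c - b))) * (c - b) := by
  have hba : 0 < b - a := sub_pos.2 hab
  have hcb : 0 < c - b := sub_pos.2 hbc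
  have hca : 0 < c - a := by linarith
  refine ⟨by positivity, by positivity, ?_⟩
  field_simp

theorem stmt_17_general {N : ℕ} (K : ℕ → ℝ) (Tprev Tcur : ℝ) (hT : Tprev < Tcur)
    (Sig : ℕ → ℝ)
    (hKmono : ∀ i, 1 ≤ i → i < N → K i < K (i + 1))
    (gp gm wp wm : ℕ → ℝ)
    (hgp : ∀ i, 2 ≤ i → i ≤ N - 1 →
      gp i = 1 / ((1 / 2 * (K (i + 1) - K (i - 1))) * (K (i + 1) - K i)))
    (hgm : ∀ i, 2 ≤ i → i ≤ N - 1 →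
      gm i = 1 / ((1 / 2 * (K (i + 1) - K (i - 1))) * (K i - K (i - 1))))
    (hwp : ∀ i, 2 ≤ i → i ≤ N - 1 →
      wp i = 1 / 2 * (Sig i * K i) ^ 2 * (Tcur - Tprev) * gp i)
    (hwm : ∀ i, 2 ≤ i → i ≤ N - 1 →
      wm i = 1 / 2 * (Sig i * K i) ^ 2 * (Tcur - Tprev) * gm i)
    (hwp1 : wp 1 = 0) (hwm1 : wm 1 = 0) (hwpN : wp N = 0) (hwmN : wm N = 0)
    (M : Matrix (Fin N) (Fin N) ℝ)
    (hM : ∀ i l : Fin N,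
      M i l = if (i : ℕ) = (l : ℕ) then 1 + wm ((l : ℕ) + 1) + wp ((l : ℕ) + 1)
              else if (i : ℕ) + 1 = (l : ℕ) then -(wm ((l : ℕ) + 1))
              else if (i : ℕ) = (l : ℕ) + 1 then -(wp ((l : ℕ) + 1))
              else 0) :
    IsUnit M ∧
    (∀ i l, 0 ≤ M⁻¹ i l) ∧
    (∀ l, ∑ i, M⁻¹ i l = 1) ∧
    (∀ l : Fin N, ∑ i : Fin N, K ((i : ℕ) + 1) * M⁻¹ i l = K ((l : ℕ) + 1)) := by
  have hweights : ∀ m, 1 ≤ m → m ≤ N →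
      0 ≤ wm m ∧ 0 ≤ wp m ∧ wm m * (K m - K (m - 1)) = wp m * (K (m + 1) - K m) := by
    intro m h1 hN
    rcases h1.eq_or_lt with rfl | h1
    · simp [hwm1, hwp1]
    rcases hN.eq_or_lt with rfl | hN
    · simp [hwmN, hwpN]
    have hlo : K (m - 1) < K m := by
      simpa [Nat.sub_add_cancel h1.le] using hKmono (m - 1) (by omega) (by omega)
    rw [hwm m h1 (by omega), hwp m h1 (by omega), hgm m h1 (by omega), hgp m h1 (by omega)]
    exact implicitWeights_nonneg_and_balance hlo (hKmono m (by omega) hN)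
      (mul_nonneg (by positivity) (sub_nonneg.2 hT.le))
  obtain rfl : M = implicitMatrix N wm wp := Matrix.ext hM
  obtain ⟨hunit, hnonneg, hone, hmart⟩ := isUnit_and_isMartingaleTransition_inv
    (implicitMatrix_apply_nonpos (fun m h1 hN => (hweights m h1 hN).1)
      (fun m h1 hN => (hweights m h1 hN).2.1))
    (one_vecMul_implicitMatrix hwm1 hwpN)
    (vecMul_implicitMatrix_of_balance hwm1 hwpN K fun m h1 hN => (hweights m h1 hN).2.2)
  refine ⟨hunit, hnonneg, fun l => ?_, congrFun hmart⟩
  simpa only [vecMul, one_dotProduct, Pi.one_apply] using congrFun hone l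

/-- the inverse of the tridiagonal implicit matrix built from
discrete local volatilities `Σⁱ ≥ 0` is a martingale transition operator with
respect to the strikes `0 < K¹ < ⋯ < Kᴺ`.  The `Fin N` index `i` corresponds to
label `i+1 ∈ {1,…,N}`. -/
theorem stmt_17 {N : ℕ} (K : ℕ → ℝ) (Tprev Tcur : ℝ) (hT : Tprev < Tcur)
    (Sig : ℕ → ℝ)
    (hKpos : 0 < K 1) (hKmono : ∀ i, 1 ≤ i → i < N → K i < K (i + 1))
    (hSig : ∀ i, 2 ≤ i → i ≤ N - 1 → 0 ≤ Sig i)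
    (gp gm wp wm : ℕ → ℝ)
    (hgp : ∀ i, 2 ≤ i → i ≤ N - 1 →
      gp i = 1 / ((1 / 2 * (K (i + 1) - K (i - 1))) * (K (i + 1) - K i)))
    (hgm : ∀ i, 2 ≤ i → i ≤ N - 1 →
      gm i = 1 / ((1 / 2 * (K (i + 1) - K (i - 1))) * (K i - K (i - 1))))
    (hwp : ∀ i, 2 ≤ i → i ≤ N - 1 →
      wp i = 1 / 2 * (Sig i * K i) ^ 2 * (Tcur - Tprev) * gp i)
    (hwm : ∀ i, 2 ≤ i → i ≤ N - 1 →
      wm i = 1 / 2 * (Sig i * K i) ^ 2 * (Tcur - Tprev) * gm i)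
    (hwp1 : wp 1 = 0) (hwm1 : wm 1 = 0) (hwpN : wp N = 0) (hwmN : wm N = 0)
    (M : Matrix (Fin N) (Fin N) ℝ)
    (hM : ∀ i l : Fin N,
      M i l = if (i : ℕ) = (l : ℕ) then 1 + wm ((l : ℕ) + 1) + wp ((l : ℕ) + 1)
              else if (i : ℕ) + 1 = (l : ℕ) then -(wm ((l : ℕ) + 1))
              else if (i : ℕ) = (l : ℕ) + 1 then -(wp ((l : ℕ) + 1))
              else 0) :
    IsUnit M ∧
    (∀ i l, 0 ≤ M⁻¹ i l) ∧
    (∀ l, ∑ i, M⁻¹ i l = 1) ∧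
    (∀ l : Fin N, ∑ i : Fin N, K ((i : ℕ) + 1) * M⁻¹ i l = K ((l : ℕ) + 1)) :=
  stmt_17_general K Tprev Tcur hT Sig hKmono gp gm wp wm hgp hgm hwp hwm hwp1 hwm1 hwpN hwmN M hM
end

section
/- Let 0 = K⁰ < K¹ < ⋯ < Kᴺ be real numbers and let C_{j−1}^i, C_j^i (0 ≤ i ≤ N) be real numbers satisfying C_{j−1}^0 = C_j^0 = 1, C_{j−1}^1 = C_j^1 = 1 − K¹, and C_{j−1}^N = C_j^N = 0. Define dC_j^i := (C_j^{i+1} − C_j^i)/(K^{i+1} − Kⁱ) for 0 ≤ i ≤ N−1 and dC_j^N := 0, and similarly for j−1; set p_j^i := dC_j^i − dC_j^{i−1} and p_{j−1}^i := dC_{j−1}^i − dC_{j−1}^{i−1} for 1 ≤ i ≤ N. Assume p_j^i > 0 for 2 ≤ i ≤ N−1. Define w^{i+} := ((C_j^i − C_{j−1}^i)/p_j^i)·(1/(K^{i+1} − Kⁱ)) and w^{i−} := ((C_j^i − C_{j−1}^i)/p_j^i)·(1/(Kⁱ − K^{i−1})) for 2 ≤ i ≤ N−1, with w^{1±} = w^{N±}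 := 0, and let M ∈ ℝ^{N×N} be the tridiagonal matrix whose column ℓ has diagonal entry 1 + w^{ℓ−} + w^{ℓ+}, entry −w^{ℓ−} in row ℓ−1, entry −w^{ℓ+} in row ℓ+1, and zeros elsewhere. Then M·p_j = p_{j−1}, where p_j = (p_j^1, …, p_j^N) and p_{j−1} = (p_{j−1}^1, …, p_{j−1}^N). -/
/-!
Write `D = C_j - C_{j-1}`. The weights are chosen so that
`w^{k-} p_j^k = D^k / (K^k - K^{k-1})` and `w^{k+} p_j^k = D^k / (K^{k+1} - K^k)`; hence the
flux `F^k = w^{(k+1)-} p_j^{k+1} - w^{k+} p_j^k` equals the difference of slopes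
`dC_j^k - dC_{j-1}^k`, also at `k = 0` and `k = N` because `D` vanishes at `0`, `1` and `N`.
Reading `M` by rows, `(M p_j)^i = p_j^i - (F^i - F^{i-1})`, which is
`p_j^i - (dC_j^i - dC_j^{i-1}) + (dC_{j-1}^i - dC_{j-1}^{i-1}) = p_{j-1}^i`.
-/

open Finset

theorem sum_Icc_mul_of_tridiagonal {R : Type*} [NonUnitalNonAssocSemiring R] {N i : ℕ}
    (hi1 : 1 ≤ i) (hiN : i ≤ N) (diag sup sub p : ℕ → R) (M : ℕ → ℕ → R)
    (hM : ∀ l, 1 ≤ l → l ≤ N →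
      M i l = if i = l then diag l else if i + 1 = l then sup l
        else if i = l + 1 then sub l else 0) :
    ∑ l ∈ Icc 1 N, M i l * p l = diag i * p i + (if i < N then sup (i + 1) * p (i + 1) else 0)
      + (if 1 < i then sub (i - 1) * p (i - 1) else 0) := by
  have hrow : ∀ l ∈ Icc 1 N, M i l * p l = (if i = l then diag i * p i else 0)
      + (if i + 1 = l then sup (i + 1) * p (i + 1) else 0)
      + (if i - 1 = l ∧ 1 < i then sub (i - 1) * p (i - 1) else 0) := by
    intro l hl
    rw [mem_Icc] at hl
    rw [hM l hl.1 hl.2]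
    split_ifs <;> first | omega | (subst_vars; simp)
  rw [sum_congr rfl hrow, sum_add_distrib, sum_add_distrib]
  simp only [ite_and, sum_ite_eq, mem_Icc]
  split_ifs <;> first | omega | simp

theorem weight_mul_eq_div {𝕜 : Type*} [Field 𝕜] {N : ℕ} (D h p w : ℕ → 𝕜)
    (hD1 : D 1 = 0) (hDN : D N = 0)
    (hp : ∀ i, 2 ≤ i → i ≤ N - 1 → p i ≠ 0)
    (hw : ∀ i, 2 ≤ i → i ≤ N - 1 → w i = (D i / p i) * (1 / h i))
    (hw1 : w 1 = 0) (hwN : w N = 0) :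
    ∀ k, 1 ≤ k → k ≤ N → w k * p k = D k / h k := by
  intro k hk1 hkN
  rcases eq_or_ne k 1 with rfl | hk1'
  · simp [hw1, hD1]
  rcases eq_or_ne k N with rfl | hkN'
  · simp [hwN, hDN]
  rw [hw k (by omega) (by omega), mul_right_comm, div_mul_cancel₀ _ (hp k (by omega) (by omega)),
    mul_one_div]

theorem slope_sub_slope_eq_flux {𝕜 : Type*} [Field 𝕜] {N : ℕ}
    (K Cp Cc dCp dCc A B : ℕ → 𝕜)
    (hC0 : Cc 0 = Cp 0) (hCN : Cc N = Cp N)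
    (hdCp : ∀ i < N, dCp i = (Cp (i + 1) - Cp i) / (K (i + 1) - K i)) (hdCpN : dCp N = 0)
    (hdCc : ∀ i < N, dCc i = (Cc (i + 1) - Cc i) / (K (i + 1) - K i)) (hdCcN : dCc N = 0)
    (hA : ∀ k, 1 ≤ k → k ≤ N → A k = (Cc k - Cp k) / (K k - K (k - 1)))
    (hB : ∀ k, 1 ≤ k → k ≤ N → B k = (Cc k - Cp k) / (K (k + 1) - K k)) :
    ∀ k ≤ N, dCc k - dCp k = (if k < N then A (k + 1) else 0) - (if 0 < k then B k else 0) := by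
  intro k hkN
  rcases hkN.lt_or_eq with hk | rfl
  · rw [if_pos hk, hdCc k hk, hdCp k hk, hA (k + 1) (by omega) hk, Nat.add_sub_cancel]
    split_ifs with hk0
    · rw [hB k hk0 hk.le]; ring
    · obtain rfl : k = 0 := by omega
      rw [hC0]; ring
  · rw [hdCcN, hdCpN, if_neg (lt_irrefl k)]
    split_ifs with hk0
    · rw [hB k hk0 le_rfl, hCN]; ring
    · ring

/-- `Cp, dCp, pp` are the data at expiry `j-1` and `Cc, dCc, pc` those at expiry `j`. -/
theorem stmt_18_general {N : ℕ} (K : ℕ → ℝ) (Cp Cc : ℕ → ℝ)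
    (hCp0 : Cp 0 = 1) (hCc0 : Cc 0 = 1)
    (hCp1 : Cp 1 = 1 - K 1) (hCc1 : Cc 1 = 1 - K 1)
    (hCpN : Cp N = 0) (hCcN : Cc N = 0)
    (dCp dCc : ℕ → ℝ)
    (hdCp : ∀ i < N, dCp i = (Cp (i + 1) - Cp i) / (K (i + 1) - K i)) (hdCpN : dCp N = 0)
    (hdCc : ∀ i < N, dCc i = (Cc (i + 1) - Cc i) / (K (i + 1) - K i)) (hdCcN : dCc N = 0)
    (pp pc : ℕ → ℝ)
    (hpp : ∀ i, 1 ≤ i → i ≤ N → pp i = dCp i - dCp (i - 1))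
    (hpc : ∀ i, 1 ≤ i → i ≤ N → pc i = dCc i - dCc (i - 1))
    (hpcpos : ∀ i, 2 ≤ i → i ≤ N - 1 → 0 < pc i)
    (wp wm : ℕ → ℝ)
    (hwp : ∀ i, 2 ≤ i → i ≤ N - 1 →
      wp i = ((Cc i - Cp i) / pc i) * (1 / (K (i + 1) - K i)))
    (hwm : ∀ i, 2 ≤ i → i ≤ N - 1 →
      wm i = ((Cc i - Cp i) / pc i) * (1 / (K i - K (i - 1))))
    (hwp1 : wp 1 = 0) (hwm1 : wm 1 = 0) (hwpN : wp N = 0) (hwmN : wm N = 0)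
    (M : ℕ → ℕ → ℝ)
    (hM : ∀ i l, 1 ≤ i → i ≤ N → 1 ≤ l → l ≤ N →
      M i l = if i = l then 1 + wm l + wp l
              else if i + 1 = l then -(wm l)
              else if i = l + 1 then -(wp l)
              else 0) :
    ∀ i, 1 ≤ i → i ≤ N → ∑ l ∈ Finset.Icc 1 N, M i l * pc l = pp i := by
  have hD1 : Cc 1 - Cp 1 = 0 := by rw [hCc1, hCp1, sub_self]
  have hDN : Cc N - Cp N = 0 := by rw [hCcN, hCpN, sub_self]
  have hpc0 : ∀ i, 2 ≤ i → i ≤ N - 1 → pc i ≠ 0 := fun i h2 h3 => (hpcpos i h2 h3).ne'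
  have flux := slope_sub_slope_eq_flux K Cp Cc dCp dCc _ _
    (by rw [hCc0, hCp0]) (by rw [hCcN, hCpN]) hdCp hdCpN hdCc hdCcN
    (weight_mul_eq_div (fun i => Cc i - Cp i) _ pc wm hD1 hDN hpc0 hwm hwm1 hwmN)
    (weight_mul_eq_div (fun i => Cc i - Cp i) _ pc wp hD1 hDN hpc0 hwp hwp1 hwpN)
  intro i hi1 hiN
  obtain ⟨j, rfl⟩ : ∃ j, i = j + 1 := ⟨i - 1, by omega⟩
  have hright := flux (j + 1) hiN
  have hleft := flux j (by omega)
  have hpci := hpc _ hi1 hiN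
  rw [sum_Icc_mul_of_tridiagonal hi1 hiN (fun l => 1 + wm l + wp l) (fun l => -wm l)
    (fun l => -wp l) pc M (hM _ · hi1 hiN), hpp _ hi1 hiN]
  simp only [Nat.add_sub_cancel, lt_add_iff_pos_left, Nat.zero_lt_succ, if_true,
    show j < N by omega] at hright hleft hpci ⊢
  split_ifs at hright hleft ⊢ <;> linear_combination hpci + hright - hleft

/-- the tridiagonal implicit matrix built from the self-consistent
weights `w^{i±} = ((C_j^i - C_{j-1}^i)/p_j^i)·(1/(K^{i±1} ∓ Kⁱ))` maps the density
`p_j` of expiry `j` back to the density `p_{j-1}` of expiry `j-1`: `M·p_j = p_{j-1}`.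
Here `Cp, dCp, pp` denote the data at expiry `j-1` and `Cc, dCc, pc` those at
expiry `j`; indices run over `1,…,N`. -/
theorem stmt_18 {N : ℕ} (K : ℕ → ℝ) (Cp Cc : ℕ → ℝ)
    (hK0 : K 0 = 0) (hKmono : ∀ i < N, K i < K (i + 1))
    (hCp0 : Cp 0 = 1) (hCc0 : Cc 0 = 1)
    (hCp1 : Cp 1 = 1 - K 1) (hCc1 : Cc 1 = 1 - K 1)
    (hCpN : Cp N = 0) (hCcN : Cc N = 0)
    (dCp dCc : ℕ → ℝ)
    (hdCp : ∀ i < N, dCp i = (Cp (i + 1) - Cp i) / (K (i + 1) - K i)) (hdCpN : dCp N = 0)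
    (hdCc : ∀ i < N, dCc i = (Cc (i + 1) - Cc i) / (K (i + 1) - K i)) (hdCcN : dCc N = 0)
    (pp pc : ℕ → ℝ)
    (hpp : ∀ i, 1 ≤ i → i ≤ N → pp i = dCp i - dCp (i - 1))
    (hpc : ∀ i, 1 ≤ i → i ≤ N → pc i = dCc i - dCc (i - 1))
    (hpcpos : ∀ i, 2 ≤ i → i ≤ N - 1 → 0 < pc i)
    (wp wm : ℕ → ℝ)
    (hwp : ∀ i, 2 ≤ i → i ≤ N - 1 →
      wp i = ((Cc i - Cp i) / pc i) * (1 / (K (i + 1) - K i)))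
    (hwm : ∀ i, 2 ≤ i → i ≤ N - 1 →
      wm i = ((Cc i - Cp i) / pc i) * (1 / (K i - K (i - 1))))
    (hwp1 : wp 1 = 0) (hwm1 : wm 1 = 0) (hwpN : wp N = 0) (hwmN : wm N = 0)
    (M : ℕ → ℕ → ℝ)
    (hM : ∀ i l, 1 ≤ i → i ≤ N → 1 ≤ l → l ≤ N →
      M i l = if i = l then 1 + wm l + wp l
              else if i + 1 = l then -(wm l)
              else if i = l + 1 then -(wp l)
              else 0) :
    ∀ i, 1 ≤ i → i ≤ N → ∑ l ∈ Finset.Icc 1 N, M i l * pc l = pp i :=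
  stmt_18_general K Cp Cc hCp0 hCc0 hCp1 hCc1 hCpN hCcN dCp dCc hdCp hdCpN hdCc hdCcN pp pc hpp hpc
    hpcpos wp wm hwp hwm hwp1 hwm1 hwpN hwmN M hM
end
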